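/- arXiv:math/0501378 — 11 statements merged into one kernel-verified Lean document; each statement's English description precedes it below -/
import Mathlib

section
/- In a D-valued poset P, for all nonempty finite subsets X, Y, Z of P, the inequality ⟦X⊆Y⟧ ∧ ⟦Y⊆Z⟧ ≤ ⟦X⊆Z⟧ holds, where ⟦X⊆Y⟧ = ⋀_{x∈X} ⋁_{y∈Y} ⟦x=y⟧. -/
open Finset

/-- The Boolean value `⟦x = y⟧ = ⟦x ≤ y⟧ ⊓ ⟦y ≤ x⟧` in a `D`-valued poset. -/
def eqv {D P : Type*} [DistribLattice D] (le : P → P → D) (x y : P) : D :=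
  le x y ⊓ le y x

/-- The Boolean value `⟦x ∈ Z⟧ = ⋁_{z ∈ Z} ⟦x = z⟧` for a nonempty finite `Z`. -/
def memv {D P : Type*} [DistribLattice D] (le : P → P → D) (x : P)
    (Z : Finset P) (hZ : Z.Nonempty) : D :=
  Z.sup' hZ (eqv le x)

/-- The Boolean value `⟦X ⊆ Y⟧ = ⋀_{x ∈ X} ⟦x ∈ Y⟧`. -/
def subv {D P : Type*} [DistribLattice D] (le : P → P → D)
    (X : Finset P) (hX : X.Nonempty) (Y : Finset P) (hY : Y.Nonempty) : D :=
  X.inf' hX fun x => memv le x Y hY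

theorem eqv_trans' {D P : Type*} [DistribLattice D] (le : P → P → D)
    (le_trans : ∀ a b c, le a b ⊓ le b c ≤ le a c) (x y z : P) :
    eqv le x y ⊓ eqv le y z ≤ eqv le x z := by
  unfold eqv
  refine le_inf ?_ ?_
  · exact le_trans x y z |>.trans' (by
      exact inf_le_inf inf_le_left inf_le_left)
  · exact le_trans z y x |>.trans' (by
      rw [inf_comm]
      exact inf_le_inf inf_le_right inf_le_right)

/-- in a `D`-valued poset, `⟦X ⊆ Y⟧ ⊓ ⟦Y ⊆ Z⟧ ≤ ⟦X ⊆ Z⟧`. -/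
theorem subv_inf_subv_le_subv {D P : Type*} [DistribLattice D] [OrderTop D] [Nonempty P]
    (le : P → P → D)
    (le_refl : ∀ a, le a a = ⊤)
    (le_trans : ∀ a b c, le a b ⊓ le b c ≤ le a c)
    (X Y Z : Finset P) (hX : X.Nonempty) (hY : Y.Nonempty) (hZ : Z.Nonempty) :
    subv le X hX Y hY ⊓ subv le Y hY Z hZ ≤ subv le X hX Z hZ := by
  refine Finset.le_inf' _ _ fun x hx => ?_
  have h1 : subv le X hX Y hY ⊓ subv le Y hY Z hZ ≤ memv le x Y hY ⊓ subv le Y hY Z hZ :=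
    inf_le_inf_right _ (Finset.inf'_le _ hx)
  refine h1.trans ?_
  rw [memv, Finset.sup'_inf_distrib_right]
  refine Finset.sup'_le _ _ fun y hy => ?_
  have h2 : eqv le x y ⊓ subv le Y hY Z hZ ≤ eqv le x y ⊓ memv le y Z hZ :=
    inf_le_inf_left _ (Finset.inf'_le _ hy)
  refine h2.trans ?_
  rw [memv, Finset.sup'_inf_distrib_left]
  refine Finset.sup'_le _ _ fun z hz => ?_
  exact (eqv_trans' le le_trans x y z).trans (Finset.le_sup' _ hz)
end

section
/- In a D-valued poset P, for all nonempty finite subsets X, Y of P, the equality ⟦X⊆Y⟧ = ⋁_{∅⊂Z⊆Y} ⟦X=Z⟧ holds, where the join runs over all nonempty subsets Z of Y and ⟦X=Z⟧ = ⟦X⊆Z⟧ ∧ ⟦Z⊆X⟧. -/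
open Finset

/-- The Boolean value `⟦X = Y⟧ = ⟦X ⊆ Y⟧ ⊓ ⟦Y ⊆ X⟧`. -/
def setEqv {D P : Type*} [DistribLattice D] (le : P → P → D)
    (X : Finset P) (hX : X.Nonempty) (Y : Finset P) (hY : Y.Nonempty) : D :=
  subv le X hX Y hY ⊓ subv le Y hY X hX

/-! Distributivity turns `⟦X ⊆ Y⟧ = ⋀_{x ∈ X} ⋁_{y ∈ Y} ⟦x = y⟧` into the join, over choices
`x ↦ y_x ∈ Y`, of `⋀_x ⟦x = y_x⟧`; since `⟦· = ·⟧` is symmetric, each such meet lies below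
`⟦X = Z⟧` for the range `Z` of the choice. Formally, one adjoins one pair `(a, y_a)` at a time, by
induction on `X`. The reverse inequality is monotonicity of `⟦X ⊆ ·⟧`. -/

section

variable {D P : Type*} [DistribLattice D] (le : P → P → D)

lemma eqv_comm (x y : P) : eqv le x y = eqv le y x := inf_comm _ _

lemma eqv_le_memv {x y : P} {Z : Finset P} (hy : y ∈ Z) :
    eqv le x y ≤ memv le x Z ⟨y, hy⟩ :=
  Finset.le_sup' _ hy

lemma memv_mono (x : P) {Z W : Finset P} (h : Z ⊆ W) (hZ : Z.Nonempty) :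
    memv le x Z hZ ≤ memv le x W (hZ.mono h) :=
  Finset.sup'_mono _ h hZ

lemma subv_le_memv (X : Finset P) (hX : X.Nonempty) {x : P} (hx : x ∈ X) (Y : Finset P)
    (hY : Y.Nonempty) : subv le X hX Y hY ≤ memv le x Y hY :=
  Finset.inf'_le _ hx

lemma subv_mono_right (X : Finset P) (hX : X.Nonempty) {Z W : Finset P} (h : Z ⊆ W)
    (hZ : Z.Nonempty) : subv le X hX Z hZ ≤ subv le X hX W (hZ.mono h) :=
  Finset.le_inf' _ _ fun x hx => (subv_le_memv le X hX hx Z hZ).trans (memv_mono le x h hZ)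

lemma subv_insert [DecidableEq P] (a : P) (X : Finset P) (hX : X.Nonempty) (Y : Finset P)
    (hY : Y.Nonempty) :
    subv le (insert a X) (Finset.insert_nonempty a X) Y hY = memv le a Y hY ⊓ subv le X hX Y hY :=
  Finset.inf'_insert _ _

lemma subv_singleton (a : P) (Y : Finset P) (hY : Y.Nonempty) :
    subv le {a} (Finset.singleton_nonempty a) Y hY = memv le a Y hY :=
  Finset.inf'_singleton _

lemma setEqv_singleton (a b : P) :
    setEqv le {a} (Finset.singleton_nonempty a) {b} (Finset.singleton_nonempty b) = eqv le a b := by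
  simp only [setEqv, subv_singleton, memv, Finset.sup'_singleton, eqv_comm le b a, inf_idem]

lemma eqv_inf_subv_le_subv_insert [DecidableEq P] {a y : P} {X Z : Finset P} (hX : X.Nonempty)
    (hZ : Z.Nonempty) :
    eqv le a y ⊓ subv le X hX Z hZ ≤
      subv le (insert a X) (Finset.insert_nonempty a X) (insert y Z)
        (Finset.insert_nonempty y Z) := by
  rw [subv_insert le a X hX]
  exact inf_le_inf (eqv_le_memv le (Finset.mem_insert_self y Z))
    (subv_mono_right le X hX (Finset.subset_insert y Z) hZ)

lemma eqv_inf_setEqv_le_setEqv_insert [DecidableEq P] {a y : P} {X Z : Finset P}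
    (hX : X.Nonempty) (hZ : Z.Nonempty) :
    eqv le a y ⊓ setEqv le X hX Z hZ ≤
      setEqv le (insert a X) (Finset.insert_nonempty a X) (insert y Z)
        (Finset.insert_nonempty y Z) := by
  refine le_inf ?_ ?_
  · exact (inf_le_inf_left _ inf_le_left).trans (eqv_inf_subv_le_subv_insert le hX hZ)
  · rw [eqv_comm]
    exact (inf_le_inf_left _ inf_le_right).trans (eqv_inf_subv_le_subv_insert le hZ hX)

/-- `⋁_{∅ ⊂ Z ⊆ Y} ⟦X = Z⟧`. -/
def supSetEqv (X : Finset P) (hX : X.Nonempty) (Y : Finset P) (hY : Y.Nonempty) : D :=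
  (Y.powerset.filter fun Z => Z.Nonempty).attach.sup'
    ⟨⟨Y, Finset.mem_filter.mpr ⟨Finset.mem_powerset.mpr (Finset.Subset.refl Y), hY⟩⟩,
      Finset.mem_attach _ _⟩
    (fun Z => setEqv le X hX Z.1 (Finset.mem_filter.mp Z.2).2)

lemma setEqv_le_supSetEqv (X : Finset P) (hX : X.Nonempty) {Y Z : Finset P} (hY : Y.Nonempty)
    (hZY : Z ⊆ Y) (hZ : Z.Nonempty) : setEqv le X hX Z hZ ≤ supSetEqv le X hX Y hY :=
  Finset.le_sup'_of_le _
    (Finset.mem_attach _ ⟨Z, Finset.mem_filter.mpr ⟨Finset.mem_powerset.mpr hZY, hZ⟩⟩)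
    le_rfl

lemma supSetEqv_le_iff (X : Finset P) (hX : X.Nonempty) (Y : Finset P) (hY : Y.Nonempty)
    {c : D} : supSetEqv le X hX Y hY ≤ c ↔
      ∀ Z, Z ⊆ Y → ∀ hZ : Z.Nonempty, setEqv le X hX Z hZ ≤ c := by
  refine ⟨fun h Z hZY hZ => (setEqv_le_supSetEqv le X hX hY hZY hZ).trans h, fun h => ?_⟩
  refine Finset.sup'_le _ _ fun ⟨Z, hZ⟩ _ => ?_
  rw [Finset.mem_filter, Finset.mem_powerset] at hZ
  exact h Z hZ.1 hZ.2

lemma supSetEqv_le_subv (X : Finset P) (hX : X.Nonempty) (Y : Finset P) (hY : Y.Nonempty) :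
    supSetEqv le X hX Y hY ≤ subv le X hX Y hY :=
  (supSetEqv_le_iff le X hX Y hY).2 fun _ hZY hZ =>
    inf_le_left.trans (subv_mono_right le X hX hZY hZ)

lemma memv_inf_setEqv_le_supSetEqv_insert [DecidableEq P] (a : P) {X Y Z : Finset P}
    (hX : X.Nonempty) (hY : Y.Nonempty) (hZY : Z ⊆ Y) (hZ : Z.Nonempty) :
    memv le a Y hY ⊓ setEqv le X hX Z hZ ≤
      supSetEqv le (insert a X) (Finset.insert_nonempty a X) Y hY := by
  rw [memv, Finset.sup'_inf_distrib_right]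
  exact Finset.sup'_le _ _ fun y hy => (eqv_inf_setEqv_le_setEqv_insert le hX hZ).trans
    (setEqv_le_supSetEqv le _ _ hY (Finset.insert_subset hy hZY) _)

lemma memv_inf_supSetEqv_le_supSetEqv_insert [DecidableEq P] (a : P) (X : Finset P)
    (hX : X.Nonempty) (Y : Finset P) (hY : Y.Nonempty) :
    memv le a Y hY ⊓ supSetEqv le X hX Y hY ≤
      supSetEqv le (insert a X) (Finset.insert_nonempty a X) Y hY := by
  refine (Finset.sup'_inf_distrib_left _ _ _).le.trans (Finset.sup'_le _ _ fun ⟨Z, hZ⟩ _ => ?_)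
  rw [Finset.mem_filter, Finset.mem_powerset] at hZ
  exact memv_inf_setEqv_le_supSetEqv_insert le a hX hY hZ.1 hZ.2

lemma subv_le_supSetEqv (X : Finset P) (hX : X.Nonempty) (Y : Finset P) (hY : Y.Nonempty) :
    subv le X hX Y hY ≤ supSetEqv le X hX Y hY := by
  classical
  induction hX using Finset.Nonempty.cons_induction with
  | singleton a =>
    rw [subv_singleton]
    refine Finset.sup'_le _ _ fun y hy => ?_
    rw [← setEqv_singleton]
    exact setEqv_le_supSetEqv le _ _ hY (Finset.singleton_subset_iff.2 hy) _
  | cons a X ha hX ih =>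
    simp only [Finset.cons_eq_insert, subv_insert le a X hX]
    exact (inf_le_inf_left _ ih).trans (memv_inf_supSetEqv_le_supSetEqv_insert le a X hX Y hY)

end

theorem subv_eq_sup_setEqv_general {D P : Type*} [DistribLattice D]
    (le : P → P → D)
    (X Y : Finset P) (hX : X.Nonempty) (hY : Y.Nonempty) :
    subv le X hX Y hY =
      (Y.powerset.filter fun Z => Z.Nonempty).attach.sup'
        ⟨⟨Y, Finset.mem_filter.mpr ⟨Finset.mem_powerset.mpr (Finset.Subset.refl Y), hY⟩⟩,
          Finset.mem_attach _ _⟩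
        (fun Z => setEqv le X hX Z.1 (Finset.mem_filter.mp Z.2).2) :=
  le_antisymm (subv_le_supSetEqv le X hX Y hY) (supSetEqv_le_subv le X hX Y hY)

/-- in a `D`-valued poset,
`⟦X ⊆ Y⟧ = ⋁_{∅ ⊂ Z ⊆ Y} ⟦X = Z⟧`, the join running over all nonempty subsets `Z` of `Y`. -/
theorem subv_eq_sup_setEqv {D P : Type*} [DistribLattice D] [OrderTop D] [Nonempty P]
    (le : P → P → D)
    (le_refl : ∀ a, le a a = ⊤)
    (le_trans : ∀ a b c, le a b ⊓ le b c ≤ le a c)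
    (X Y : Finset P) (hX : X.Nonempty) (hY : Y.Nonempty) :
    subv le X hX Y hY =
      (Y.powerset.filter fun Z => Z.Nonempty).attach.sup'
        ⟨⟨Y, Finset.mem_filter.mpr ⟨Finset.mem_powerset.mpr (Finset.Subset.refl Y), hY⟩⟩,
          Finset.mem_attach _ _⟩
        (fun Z => setEqv le X hX Z.1 (Finset.mem_filter.mp Z.2).2) :=
  subv_eq_sup_setEqv_general le X Y hX hY
end

section
/- Let D be a distributive lattice and let a, b ∈ D. Then a ≤ b if and only if, for every prime filter G of D, a ∈ G implies b ∈ G. -/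
/-- in a distributive lattice `D`, `a ≤ b` if and only if every prime filter
containing `a` also contains `b`.  A filter is a nonempty upper subset closed under finite
meets; it is prime if it is proper and `x ⊔ y ∈ G` implies `x ∈ G` or `y ∈ G`. -/
theorem le_iff_forall_primeFilter {D : Type*} [DistribLattice D] (a b : D) :
    a ≤ b ↔
      ∀ G : Set D, G.Nonempty →
        (∀ x ∈ G, ∀ y, x ≤ y → y ∈ G) →
        (∀ x ∈ G, ∀ y ∈ G, x ⊓ y ∈ G) →
        G ≠ Set.univ →
        (∀ x y, x ⊔ y ∈ G → x ∈ G ∨ y ∈ G) →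
        a ∈ G → b ∈ G := by
  constructor
  · intro hab G _ hup _ _ _ haG
    exact hup a haG b hab
  · intro h
    by_contra hab
    -- work in the bounded distributive lattice α
    set α := WithTop (WithBot D)
    let e : D → α := fun x => ((x : WithBot D) : α)
    have he : ∀ x y : D, e x ≤ e y ↔ x ≤ y := by
      intro x y
      exact WithTop.coe_le_coe.trans WithBot.coe_le_coe
    have heinf : ∀ x y : D, e (x ⊓ y) = e x ⊓ e y := by
      intro x y; simp only [e, WithBot.coe_inf, WithTop.coe_inf, WithBot.coe_sup, WithTop.coe_sup]
    have hesup : ∀ x y : D, e (x ⊔ y) = e x ⊔ e y := by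
      intro x y; simp only [e, WithBot.coe_inf, WithTop.coe_inf, WithBot.coe_sup, WithTop.coe_sup]
    let F : Order.PFilter α := Order.PFilter.principal (e a)
    let I : Order.Ideal α := Order.Ideal.principal (e b)
    have hFI : Disjoint (F : Set α) (I : Set α) := by
      rw [Set.disjoint_left]
      rintro x hxF hxI
      have h1 : e a ≤ x := hxF
      have h2 : x ≤ e b := hxI
      exact hab ((he a b).1 (h1.trans h2))
    obtain ⟨J, hJprime, hIJ, hJF⟩ :=
      DistribLattice.prime_ideal_of_disjoint_filter_ideal (F := F) (I := I) hFI
    set G : Set D := {x : D | e x ∉ J}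
    have haG : a ∈ G := Set.disjoint_left.1 hJF (Order.PFilter.mem_principal.2 le_rfl)
    have hbG : b ∉ G := by
      simp only [G, Set.mem_setOf_eq, not_not]
      exact hIJ (Order.Ideal.mem_principal.2 le_rfl)
    refine hbG (h G ⟨a, haG⟩ ?_ ?_ ?_ ?_ haG)
    · intro x hx y hxy hyJ
      exact hx (J.lower ((he x y).2 hxy) hyJ)
    · intro x hx y hy hxy
      rcases hJprime.mem_or_mem (heinf x y ▸ hxy) with h' | h'
      · exact hx h'
      · exact hy h'
    · intro hG
      have : b ∈ G := hG ▸ Set.mem_univ b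
      exact hbG this
    · intro x y hxy
      by_contra hc
      push_neg at hc
      obtain ⟨hx, hy⟩ := hc
      simp only [G, Set.mem_setOf_eq, not_not] at hx hy
      exact hxy ((hesup x y).symm ▸ J.sup_mem hx hy)
end

section
/- Let ⟨K, P, Q⟩ be a standard V-formation of partial lattices, i.e., K is a lattice, K = P ∩ Q, and K is a partial sublattice of both partial lattices P and Q. Define R = P ∪ Q with the relation x ≤ y iff (x, y ∈ P and x ≤_P y), or (x, y ∈ Q and x ≤_Q y), or (x ∈ P, y ∈ Q and there exists z ∈ K with x ≤_P z and z ≤_Q y), or symmetrically. Define joins and meets in R to be exactly those holding in P or in Q. Then R is a partial lattice: in particular, if a = ⋁X holds in R then a = sup X with respect to ≤ on R. -/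
open Finset

open Finset

/-- The amalgam order on `R = P ∪ Q`. -/
def amalgLe {R : Type*} (P Q : Set R) (leP leQ : R → R → Prop) (x y : R) : Prop :=
  (x ∈ P ∧ y ∈ P ∧ leP x y) ∨ (x ∈ Q ∧ y ∈ Q ∧ leQ x y) ∨
  (x ∈ P ∧ y ∈ Q ∧ ∃ z ∈ P ∩ Q, leP x z ∧ leQ z y) ∨
  (x ∈ Q ∧ y ∈ P ∧ ∃ z ∈ P ∩ Q, leQ x z ∧ leP z y)

theorem amalgLe_swap {R : Type*} {P Q : Set R} {leP leQ : R → R → Prop} {x y : R} :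
    amalgLe Q P leQ leP x y ↔ amalgLe P Q leP leQ x y := by
  unfold amalgLe
  rw [Set.inter_comm]
  constructor <;>
    (rintro (⟨h1, h2, h3⟩ | ⟨h1, h2, h3⟩ | ⟨h1, h2, z, hz, h3, h4⟩ | ⟨h1, h2, z, hz, h3, h4⟩))
  · exact Or.inr (Or.inl ⟨h1, h2, h3⟩)
  · exact Or.inl ⟨h1, h2, h3⟩
  · exact Or.inr (Or.inr (Or.inr ⟨h1, h2, z, hz, h3, h4⟩))
  · exact Or.inr (Or.inr (Or.inl ⟨h1, h2, z, hz, h3, h4⟩))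
  · exact Or.inr (Or.inl ⟨h1, h2, h3⟩)
  · exact Or.inl ⟨h1, h2, h3⟩
  · exact Or.inr (Or.inr (Or.inr ⟨h1, h2, z, hz, h3, h4⟩))
  · exact Or.inr (Or.inr (Or.inl ⟨h1, h2, z, hz, h3, h4⟩))

theorem amalgLe_flip {R : Type*} {P Q : Set R} {leP leQ : R → R → Prop} {x y : R} :
    amalgLe P Q (flip leP) (flip leQ) x y ↔ amalgLe P Q leP leQ y x := by
  unfold amalgLe flip
  constructor <;>
    (rintro (⟨h1, h2, h3⟩ | ⟨h1, h2, h3⟩ | ⟨h1, h2, z, hz, h3, h4⟩ | ⟨h1, h2, z, hz, h3, h4⟩))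
  · exact Or.inl ⟨h2, h1, h3⟩
  · exact Or.inr (Or.inl ⟨h2, h1, h3⟩)
  · exact Or.inr (Or.inr (Or.inr ⟨h2, h1, z, hz, h4, h3⟩))
  · exact Or.inr (Or.inr (Or.inl ⟨h2, h1, z, hz, h4, h3⟩))
  · exact Or.inl ⟨h2, h1, h3⟩
  · exact Or.inr (Or.inl ⟨h2, h1, h3⟩)
  · exact Or.inr (Or.inr (Or.inr ⟨h2, h1, z, hz, h4, h3⟩))
  · exact Or.inr (Or.inr (Or.inl ⟨h2, h1, z, hz, h4, h3⟩))

theorem amalgLe_absorbP {R : Type*} {P Q : Set R} {leP leQ : R → R → Prop}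
    (hPtrans : ∀ x ∈ P, ∀ y ∈ P, ∀ z ∈ P, leP x y → leP y z → leP x z)
    (hagree : ∀ x ∈ P ∩ Q, ∀ y ∈ P ∩ Q, (leP x y ↔ leQ x y))
    {x y : R} (hx : x ∈ P) (hy : y ∈ P) (h : amalgLe P Q leP leQ x y) : leP x y := by
  rcases h with ⟨_, _, h⟩ | ⟨xQ, yQ, h⟩ | ⟨_, yQ, z, zK, h1, h2⟩ | ⟨xQ, _, z, zK, h1, h2⟩
  · exact h
  · exact (hagree x ⟨hx, xQ⟩ y ⟨hy, yQ⟩).mpr h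
  · exact hPtrans _ hx _ zK.1 _ hy h1 ((hagree z zK y ⟨hy, yQ⟩).mpr h2)
  · exact hPtrans _ hx _ zK.1 _ hy ((hagree x ⟨hx, xQ⟩ z zK).mpr h1) h2

theorem amalgLe_trans {R : Type*} {P Q : Set R} {leP leQ : R → R → Prop}
    (hPtrans : ∀ x ∈ P, ∀ y ∈ P, ∀ z ∈ P, leP x y → leP y z → leP x z)
    (hQtrans : ∀ x ∈ Q, ∀ y ∈ Q, ∀ z ∈ Q, leQ x y → leQ y z → leQ x z)
    (hagree : ∀ x ∈ P ∩ Q, ∀ y ∈ P ∩ Q, (leP x y ↔ leQ x y))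
    {x y z : R} (hxy : amalgLe P Q leP leQ x y) (hyz : amalgLe P Q leP leQ y z) :
    amalgLe P Q leP leQ x z := by
  have hPQ : ∀ {u v : R}, u ∈ P ∩ Q → v ∈ P ∩ Q → leP u v → leQ u v :=
    fun hu hv h => (hagree _ hu _ hv).mp h
  have hQP : ∀ {u v : R}, u ∈ P ∩ Q → v ∈ P ∩ Q → leQ u v → leP u v :=
    fun hu hv h => (hagree _ hu _ hv).mpr h
  rcases hxy with ⟨xP, yP, h1⟩ | ⟨xQ, yQ, h1⟩ | ⟨xP, yQ, w, wK, h1, h2⟩ |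
      ⟨xQ, yP, w, wK, h1, h2⟩ <;>
    rcases hyz with ⟨yP', zP, g1⟩ | ⟨yQ', zQ, g1⟩ | ⟨yP', zQ, v, vK, g1, g2⟩ |
      ⟨yQ', zP, v, vK, g1, g2⟩
  · exact Or.inl ⟨xP, zP, hPtrans _ xP _ yP _ zP h1 g1⟩
  · exact Or.inr (Or.inr (Or.inl ⟨xP, zQ, y, ⟨yP, yQ'⟩, h1, g1⟩))
  · exact Or.inr (Or.inr (Or.inl ⟨xP, zQ, v, vK, hPtrans _ xP _ yP _ vK.1 h1 g1, g2⟩))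
  · exact Or.inl ⟨xP, zP, hPtrans _ xP _ vK.1 _ zP
      (hPtrans _ xP _ yP _ vK.1 h1 (hQP ⟨yP, yQ'⟩ vK g1)) g2⟩
  · exact Or.inr (Or.inr (Or.inr ⟨xQ, zP, y, ⟨yP', yQ⟩, h1, g1⟩))
  · exact Or.inr (Or.inl ⟨xQ, zQ, hQtrans _ xQ _ yQ _ zQ h1 g1⟩)
  · exact Or.inr (Or.inl ⟨xQ, zQ, hQtrans _ xQ _ vK.2 _ zQ
      (hQtrans _ xQ _ yQ _ vK.2 h1 (hPQ ⟨yP', yQ⟩ vK g1)) g2⟩)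
  · exact Or.inr (Or.inr (Or.inr ⟨xQ, zP, v, vK, hQtrans _ xQ _ yQ _ vK.2 h1 g1, g2⟩))
  · exact Or.inl ⟨xP, zP, hPtrans _ xP _ yP' _ zP
      (hPtrans _ xP _ wK.1 _ yP' h1 (hQP wK ⟨yP', yQ⟩ h2)) g1⟩
  · exact Or.inr (Or.inr (Or.inl ⟨xP, zQ, w, wK, h1, hQtrans _ wK.2 _ yQ _ zQ h2 g1⟩))
  · exact Or.inr (Or.inr (Or.inl ⟨xP, zQ, v, vK, hPtrans _ xP _ yP' _ vK.1
      (hPtrans _ xP _ wK.1 _ yP' h1 (hQP wK ⟨yP', yQ⟩ h2)) g1, g2⟩))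
  · exact Or.inl ⟨xP, zP, hPtrans _ xP _ vK.1 _ zP
      (hPtrans _ xP _ wK.1 _ vK.1 h1 (hQP wK vK (hQtrans _ wK.2 _ yQ _ vK.2 h2 g1))) g2⟩
  · exact Or.inr (Or.inr (Or.inr ⟨xQ, zP, w, wK, h1, hPtrans _ wK.1 _ yP _ zP h2 g1⟩))
  · exact Or.inr (Or.inl ⟨xQ, zQ, hQtrans _ xQ _ yQ' _ zQ
      (hQtrans _ xQ _ wK.2 _ yQ' h1 (hPQ wK ⟨yP, yQ'⟩ h2)) g1⟩)
  · exact Or.inr (Or.inl ⟨xQ, zQ, hQtrans _ xQ _ vK.2 _ zQ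
      (hQtrans _ xQ _ wK.2 _ vK.2 h1 (hPQ wK vK (hPtrans _ wK.1 _ yP _ vK.1 h2 g1))) g2⟩)
  · exact Or.inr (Or.inr (Or.inr ⟨xQ, zP, v, vK, hQtrans _ xQ _ yQ' _ vK.2
      (hQtrans _ xQ _ wK.2 _ yQ' h1 (hPQ wK ⟨yP, yQ'⟩ h2)) g1, g2⟩))

theorem amalg_sup_aux {R : Type*} {P Q : Set R} {leP leQ : R → R → Prop}
    {joinP joinQ : Finset R → Option R}
    (hPrefl : ∀ x ∈ P, leP x x)
    (hPtrans : ∀ x ∈ P, ∀ y ∈ P, ∀ z ∈ P, leP x y → leP y z → leP x z)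
    (hjoinP : ∀ (X : Finset R) (a : R), joinP X = some a →
      X.Nonempty ∧ ↑X ⊆ P ∧ a ∈ P ∧ (∀ x ∈ X, leP x a) ∧
        ∀ b ∈ P, (∀ x ∈ X, leP x b) → leP a b)
    (hjoinQ : ∀ (X : Finset R) (a : R), joinQ X = some a →
      X.Nonempty ∧ ↑X ⊆ Q ∧ a ∈ Q ∧ (∀ x ∈ X, leQ x a) ∧
        ∀ b ∈ Q, (∀ x ∈ X, leQ x b) → leQ a b)
    (hagree : ∀ x ∈ P ∩ Q, ∀ y ∈ P ∩ Q, (leP x y ↔ leQ x y))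
    (hKjoin : ∀ X : Finset R, ↑X ⊆ P ∩ Q → X.Nonempty →
      ∃ c ∈ P ∩ Q, joinP X = some c ∧ joinQ X = some c)
    (X : Finset R) (a : R) (ha : joinP X = some a) :
    (∀ x ∈ X, amalgLe P Q leP leQ x a) ∧
      ∀ b, (∀ x ∈ X, amalgLe P Q leP leQ x b) → amalgLe P Q leP leQ a b := by
  obtain ⟨hne, hXP, haP, hub, hlub⟩ := hjoinP X a ha
  refine ⟨fun x hx => Or.inl ⟨hXP hx, haP, hub x hx⟩, fun b hb => ?_⟩
  by_cases hbP : b ∈ P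
  · exact Or.inl ⟨haP, hbP, hlub b hbP
      (fun x hx => amalgLe_absorbP hPtrans hagree (hXP hx) hbP (hb x hx))⟩
  · have hbQ : b ∈ Q := by
      obtain ⟨x0, hx0⟩ := hne
      rcases hb x0 hx0 with ⟨_, h, _⟩ | ⟨_, h, _⟩ | ⟨_, h, _⟩ | ⟨_, h, _⟩
      · exact absurd h hbP
      · exact h
      · exact h
      · exact absurd h hbP
    have h2 : ∀ x : R, ∃ z, x ∈ X → z ∈ P ∩ Q ∧ leP x z ∧ leQ z b := by
      intro x
      by_cases hx : x ∈ X
      · rcases hb x hx with ⟨_, hbP', _⟩ | ⟨xQ, _, h⟩ | ⟨_, _, z, hz, hz1, hz2⟩ |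
          ⟨_, hbP', _⟩
        · exact absurd hbP' hbP
        · exact ⟨x, fun _ => ⟨⟨hXP hx, xQ⟩, hPrefl x (hXP hx), h⟩⟩
        · exact ⟨z, fun _ => ⟨hz, hz1, hz2⟩⟩
        · exact absurd hbP' hbP
      · exact ⟨x, fun h => absurd h hx⟩
    classical
    choose f hf using h2
    have hYK : ↑(X.image f) ⊆ P ∩ Q := by
      intro y hy
      obtain ⟨x, hx, rfl⟩ := Finset.mem_image.mp (Finset.mem_coe.mp hy)
      exact (hf x hx).1
    obtain ⟨c, hcK, hcP, hcQ⟩ := hKjoin (X.image f) hYK (hne.image f)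
    obtain ⟨_, _, _, hubP, _⟩ := hjoinP (X.image f) c hcP
    obtain ⟨_, _, _, _, hlubQ⟩ := hjoinQ (X.image f) c hcQ
    have hac : leP a c := hlub c hcK.1 (fun x hx =>
      hPtrans _ (hXP hx) _ (hf x hx).1.1 _ hcK.1 (hf x hx).2.1
        (hubP (f x) (Finset.mem_image_of_mem f hx)))
    have hcb : leQ c b := hlubQ b hbQ (fun y hy => by
      obtain ⟨x, hx, rfl⟩ := Finset.mem_image.mp hy
      exact (hf x hx).2.2)
    exact Or.inr (Or.inr (Or.inl ⟨haP, hbQ, c, hcK, hac, hcb⟩))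

theorem amalgLe_antisymm {R : Type*} {P Q : Set R} {leP leQ : R → R → Prop}
    (hPtrans : ∀ x ∈ P, ∀ y ∈ P, ∀ z ∈ P, leP x y → leP y z → leP x z)
    (hPanti : ∀ x ∈ P, ∀ y ∈ P, leP x y → leP y x → x = y)
    (hQtrans : ∀ x ∈ Q, ∀ y ∈ Q, ∀ z ∈ Q, leQ x y → leQ y z → leQ x z)
    (hQanti : ∀ x ∈ Q, ∀ y ∈ Q, leQ x y → leQ y x → x = y)
    (hagree : ∀ x ∈ P ∩ Q, ∀ y ∈ P ∩ Q, (leP x y ↔ leQ x y))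
    {x y : R} (hxy : amalgLe P Q leP leQ x y) (hyx : amalgLe P Q leP leQ y x) : x = y := by
  have hagree' : ∀ x ∈ Q ∩ P, ∀ y ∈ Q ∩ P, (leQ x y ↔ leP x y) :=
    fun x hx y hy => (hagree x ⟨hx.2, hx.1⟩ y ⟨hy.2, hy.1⟩).symm
  have absorbQ : ∀ {u v : R}, u ∈ Q → v ∈ Q → amalgLe P Q leP leQ u v → leQ u v :=
    fun hu hv h => amalgLe_absorbP hQtrans hagree' hu hv (amalgLe_swap.mpr h)
  rcases hxy with ⟨xP, yP, h1⟩ | ⟨xQ, yQ, h1⟩ | ⟨xP, yQ, z, zK, h1, h2⟩ | ⟨xQ, yP, z, zK, h1, h2⟩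
  · exact hPanti _ xP _ yP h1 (amalgLe_absorbP hPtrans hagree yP xP hyx)
  · exact hQanti _ xQ _ yQ h1 (absorbQ yQ xQ hyx)
  · rcases hyx with ⟨yP, xP', g⟩ | ⟨yQ', xQ, g⟩ | ⟨yP, xQ, v, vK, g1, g2⟩ |
      ⟨yQ', xP', w, wK, g1, g2⟩
    · exact hPanti _ xP _ yP
        (hPtrans _ xP _ zK.1 _ yP h1 ((hagree z zK y ⟨yP, yQ⟩).mpr h2)) g
    · exact hQanti _ xQ _ yQ
        (hQtrans _ xQ _ zK.2 _ yQ ((hagree x ⟨xP, xQ⟩ z zK).mp h1) h2) g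
    · exact hPanti _ xP _ yP
        (hPtrans _ xP _ zK.1 _ yP h1 ((hagree z zK y ⟨yP, yQ⟩).mpr h2))
        (hPtrans _ yP _ vK.1 _ xP g1 ((hagree v vK x ⟨xP, xQ⟩).mpr g2))
    · have hzw : leQ z w := hQtrans _ zK.2 _ yQ _ wK.2 h2 g1
      have hzwP : leP z w := (hagree z zK w wK).mpr hzw
      have hxw : x = w := hPanti _ xP _ wK.1 (hPtrans _ xP _ zK.1 _ wK.1 h1 hzwP) g2
      subst hxw
      have hxz : leQ x z := (hagree x wK z zK).mp h1
      exact hQanti _ wK.2 _ yQ (hQtrans _ wK.2 _ zK.2 _ yQ hxz h2) g1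
  · rcases hyx with ⟨yP', xP, g⟩ | ⟨yQ, xQ', g⟩ | ⟨yP', xQ', v, vK, g1, g2⟩ |
      ⟨yQ, xP, w, wK, g1, g2⟩
    · exact hPanti _ xP _ yP
        (hPtrans _ xP _ zK.1 _ yP ((hagree x ⟨xP, xQ⟩ z zK).mpr h1) h2) g
    · exact hQanti _ xQ _ yQ
        (hQtrans _ xQ _ zK.2 _ yQ h1 ((hagree z zK y ⟨yP, yQ⟩).mp h2)) g
    · have hzv : leP z v := hPtrans _ zK.1 _ yP _ vK.1 h2 g1
      have hzvQ : leQ z v := (hagree z zK v vK).mp hzv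
      have hxv : x = v := hQanti _ xQ _ vK.2 (hQtrans _ xQ _ zK.2 _ vK.2 h1 hzvQ) g2
      subst hxv
      have hxz : leP x z := (hagree x vK z zK).mpr h1
      exact hPanti _ vK.1 _ yP (hPtrans _ vK.1 _ zK.1 _ yP hxz h2) g1
    · exact hQanti _ xQ _ yQ
        (hQtrans _ xQ _ zK.2 _ yQ h1 ((hagree z zK y ⟨yP, yQ⟩).mp h2))
        (hQtrans _ yQ _ wK.2 _ xQ g1 ((hagree w wK x ⟨xP, xQ⟩).mp g2))



/-- the amalgam `R = P ∪ Q` of a standard V-formation `⟨K, P, Q⟩` of partial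
lattices over a (total) lattice `K = P ∩ Q` is a partial lattice: the relation `≤` defined
by the four clauses is a partial order, and any join (resp. meet) defined in `P` or in `Q`
is a supremum (resp. infimum) of its set of arguments with respect to `≤` on all of `R`. -/
theorem amalgam_partialLattice {R : Type*} (P Q : Set R) (hcover : P ∪ Q = Set.univ)
    (leP leQ : R → R → Prop)
    (joinP joinQ meetP meetQ : Finset R → Option R)
    -- `P` is a partial lattice
    (hPrefl : ∀ x ∈ P, leP x x)
    (hPtrans : ∀ x ∈ P, ∀ y ∈ P, ∀ z ∈ P, leP x y → leP y z → leP x z)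
    (hPanti : ∀ x ∈ P, ∀ y ∈ P, leP x y → leP y x → x = y)
    (hjoinP : ∀ (X : Finset R) (a : R), joinP X = some a →
      X.Nonempty ∧ ↑X ⊆ P ∧ a ∈ P ∧ (∀ x ∈ X, leP x a) ∧
        ∀ b ∈ P, (∀ x ∈ X, leP x b) → leP a b)
    (hmeetP : ∀ (X : Finset R) (a : R), meetP X = some a →
      X.Nonempty ∧ ↑X ⊆ P ∧ a ∈ P ∧ (∀ x ∈ X, leP a x) ∧
        ∀ b ∈ P, (∀ x ∈ X, leP b x) → leP b a)
    -- `Q` is a partial lattice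
    (hQrefl : ∀ x ∈ Q, leQ x x)
    (hQtrans : ∀ x ∈ Q, ∀ y ∈ Q, ∀ z ∈ Q, leQ x y → leQ y z → leQ x z)
    (hQanti : ∀ x ∈ Q, ∀ y ∈ Q, leQ x y → leQ y x → x = y)
    (hjoinQ : ∀ (X : Finset R) (a : R), joinQ X = some a →
      X.Nonempty ∧ ↑X ⊆ Q ∧ a ∈ Q ∧ (∀ x ∈ X, leQ x a) ∧
        ∀ b ∈ Q, (∀ x ∈ X, leQ x b) → leQ a b)
    (hmeetQ : ∀ (X : Finset R) (a : R), meetQ X = some a →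
      X.Nonempty ∧ ↑X ⊆ Q ∧ a ∈ Q ∧ (∀ x ∈ X, leQ a x) ∧
        ∀ b ∈ Q, (∀ x ∈ X, leQ b x) → leQ b a)
    -- the two orderings agree on `K = P ∩ Q`
    (hagree : ∀ x ∈ P ∩ Q, ∀ y ∈ P ∩ Q, (leP x y ↔ leQ x y))
    -- `K` is a lattice, and a partial sublattice of both `P` and `Q`
    (hKjoin : ∀ X : Finset R, ↑X ⊆ P ∩ Q → X.Nonempty →
      ∃ c ∈ P ∩ Q, joinP X = some c ∧ joinQ X = some c)
    (hKmeet : ∀ X : Finset R, ↑X ⊆ P ∩ Q → X.Nonempty →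
      ∃ c ∈ P ∩ Q, meetP X = some c ∧ meetQ X = some c) :
    -- the ordering of the amalgam `R = P ⨿_K Q`
    let leR : R → R → Prop := fun x y =>
      (x ∈ P ∧ y ∈ P ∧ leP x y) ∨ (x ∈ Q ∧ y ∈ Q ∧ leQ x y) ∨
      (x ∈ P ∧ y ∈ Q ∧ ∃ z ∈ P ∩ Q, leP x z ∧ leQ z y) ∨
      (x ∈ Q ∧ y ∈ P ∧ ∃ z ∈ P ∩ Q, leQ x z ∧ leP z y)
    (∀ x, leR x x) ∧
    (∀ x y z, leR x y → leR y z → leR x z) ∧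
    (∀ x y, leR x y → leR y x → x = y) ∧
    (∀ (X : Finset R) (a : R), (joinP X = some a ∨ joinQ X = some a) →
      (∀ x ∈ X, leR x a) ∧ ∀ b, (∀ x ∈ X, leR x b) → leR a b) ∧
    (∀ (X : Finset R) (a : R), (meetP X = some a ∨ meetQ X = some a) →
      (∀ x ∈ X, leR a x) ∧ ∀ b, (∀ x ∈ X, leR b x) → leR b a) := by
  intro leR
  have hagreeQP : ∀ x ∈ Q ∩ P, ∀ y ∈ Q ∩ P, (leQ x y ↔ leP x y) :=
    fun x hx y hy => (hagree x ⟨hx.2, hx.1⟩ y ⟨hy.2, hy.1⟩).symm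
  have hKjoin' : ∀ X : Finset R, ↑X ⊆ Q ∩ P → X.Nonempty →
      ∃ c ∈ Q ∩ P, joinQ X = some c ∧ joinP X = some c := by
    intro X hX hne
    rw [Set.inter_comm] at hX
    obtain ⟨c, hc, h1, h2⟩ := hKjoin X hX hne
    exact ⟨c, ⟨hc.2, hc.1⟩, h2, h1⟩
  have hKmeet' : ∀ X : Finset R, ↑X ⊆ Q ∩ P → X.Nonempty →
      ∃ c ∈ Q ∩ P, meetQ X = some c ∧ meetP X = some c := by
    intro X hX hne
    rw [Set.inter_comm] at hX
    obtain ⟨c, hc, h1, h2⟩ := hKmeet X hX hne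
    exact ⟨c, ⟨hc.2, hc.1⟩, h2, h1⟩
  have hPtransF : ∀ x ∈ P, ∀ y ∈ P, ∀ z ∈ P, flip leP x y → flip leP y z → flip leP x z :=
    fun x hx y hy z hz h1 h2 => hPtrans z hz y hy x hx h2 h1
  have hQtransF : ∀ x ∈ Q, ∀ y ∈ Q, ∀ z ∈ Q, flip leQ x y → flip leQ y z → flip leQ x z :=
    fun x hx y hy z hz h1 h2 => hQtrans z hz y hy x hx h2 h1
  have hagreeF : ∀ x ∈ P ∩ Q, ∀ y ∈ P ∩ Q, (flip leP x y ↔ flip leQ x y) :=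
    fun x hx y hy => hagree y hy x hx
  have hagreeQPF : ∀ x ∈ Q ∩ P, ∀ y ∈ Q ∩ P, (flip leQ x y ↔ flip leP x y) :=
    fun x hx y hy => hagreeQP y hy x hx
  refine ⟨?_, ?_, ?_, ?_, ?_⟩
  · intro x
    have hx : x ∈ P ∪ Q := hcover.symm ▸ Set.mem_univ x
    rcases hx with hx | hx
    · exact Or.inl ⟨hx, hx, hPrefl x hx⟩
    · exact Or.inr (Or.inl ⟨hx, hx, hQrefl x hx⟩)
  · exact fun x y z hxy hyz => amalgLe_trans hPtrans hQtrans hagree hxy hyz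
  · exact fun x y hxy hyx => amalgLe_antisymm hPtrans hPanti hQtrans hQanti hagree hxy hyx
  · intro X a h
    rcases h with h | h
    · exact amalg_sup_aux hPrefl hPtrans hjoinP hjoinQ hagree hKjoin X a h
    · obtain ⟨h1, h2⟩ := amalg_sup_aux hQrefl hQtrans hjoinQ hjoinP hagreeQP hKjoin' X a h
      exact ⟨fun x hx => amalgLe_swap.mp (h1 x hx),
        fun b hb => amalgLe_swap.mp (h2 b (fun x hx => amalgLe_swap.mpr (hb x hx)))⟩
  · intro X a h
    rcases h with h | h
    · obtain ⟨h1, h2⟩ := amalg_sup_aux (leP := flip leP) (leQ := flip leQ)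
        hPrefl hPtransF hmeetP hmeetQ hagreeF hKmeet X a h
      exact ⟨fun x hx => amalgLe_flip.mp (h1 x hx),
        fun b hb => amalgLe_flip.mp (h2 b (fun x hx => amalgLe_flip.mpr (hb x hx)))⟩
    · obtain ⟨h1, h2⟩ := amalg_sup_aux (leP := flip leQ) (leQ := flip leP)
        hQrefl hQtransF hmeetQ hmeetP hagreeQPF hKmeet' X a h
      exact ⟨fun x hx => amalgLe_swap.mp (amalgLe_flip.mp (h1 x hx)),
        fun b hb => amalgLe_swap.mp (amalgLe_flip.mp (h2 b
          (fun x hx => amalgLe_flip.mpr (amalgLe_swap.mpr (hb x hx)))))⟩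
end

section
/- Let P be a finitely sampled D-valued partial lattice, let X be a nonempty finite subset of P, let U and V both be join-samples of X. Then for every a ∈ P, ⋁_{u∈U} (⟦a≤u⟧ ∧ ⟦u=⋁X⟧) = ⋁_{v∈V} (⟦a≤v⟧ ∧ ⟦v=⋁X⟧). Hence the element ⟦a ≤ ⋁X⟧ is well-defined independently of the chosen join-sample. -/
open Finset

/-- A `D`-valued poset: a set `P` with Boolean values `⟦a ≤ b⟧ ∈ D` satisfying
reflexivity and transitivity. -/
structure DValuedPoset (D P : Type*) [DistribLattice D] [OrderTop D] where
  le : P → P → D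
  le_refl : ∀ a, le a a = ⊤
  le_trans : ∀ a b c, le a b ⊓ le b c ≤ le a c

/-- A `D`-valued partial lattice: a `D`-valued poset with Boolean values
`⟦a = ⋁X⟧` and `⟦a = ⋀X⟧` satisfying conditions (1), (1*), (2), (2*), (3), (3*). -/
structure DValuedPartialLattice (D P : Type*) [DistribLattice D] [OrderTop D]
    extends DValuedPoset D P where
  jn : P → Finset P → D
  mt : P → Finset P → D
  jn_le : ∀ a b (X : Finset P) (hX : X.Nonempty),
    jn a X ⊓ le a b = jn a X ⊓ X.inf' hX fun x => le x b
  mt_le : ∀ a b (X : Finset P) (hX : X.Nonempty),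
    mt a X ⊓ le b a = mt a X ⊓ X.inf' hX fun x => le b x
  jn_congr : ∀ a (X Y : Finset P) (hX : X.Nonempty) (hY : Y.Nonempty),
    jn a X ⊓ setEqv le X hX Y hY ≤ jn a Y
  mt_congr : ∀ a (X Y : Finset P) (hX : X.Nonempty) (hY : Y.Nonempty),
    mt a X ⊓ setEqv le X hX Y hY ≤ mt a Y
  jn_eq : ∀ a b (X : Finset P), jn a X ⊓ eqv le a b ≤ jn b X
  mt_eq : ∀ a b (X : Finset P), mt a X ⊓ eqv le a b ≤ mt b X

/-- `U` is a join-sample of `X`: `⟦x=⋁X⟧ ≤ ⋁_{u∈U}⟦u=⋁X⟧` for all `x`. -/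
def IsJoinSample {D P : Type*} [DistribLattice D] [OrderTop D]
    (V : DValuedPartialLattice D P) (X U : Finset P) : Prop :=
  ∃ hU : U.Nonempty, ∀ x, V.jn x X ≤ U.sup' hU fun u => V.jn u X

/-- `U` is a meet-sample of `X`: `⟦x=⋀X⟧ ≤ ⋁_{u∈U}⟦u=⋀X⟧` for all `x`. -/
def IsMeetSample {D P : Type*} [DistribLattice D] [OrderTop D]
    (V : DValuedPartialLattice D P) (X U : Finset P) : Prop :=
  ∃ hU : U.Nonempty, ∀ x, V.mt x X ≤ U.sup' hU fun u => V.mt u X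

/-- in a finitely sampled `D`-valued partial lattice, the value
`⟦a ≤ ⋁X⟧ = ⋁_{u∈U}(⟦a≤u⟧ ⊓ ⟦u=⋁X⟧)` does not depend on the choice of a join-sample `U`
of `X`. -/
theorem sup_over_joinSample_eq {D P : Type*} [DistribLattice D] [OrderTop D] [Nonempty P]
    (V : DValuedPartialLattice D P)
    (hFS : ∀ X : Finset P, X.Nonempty →
      (∃ U, IsJoinSample V X U) ∧ (∃ U, IsMeetSample V X U))
    (X : Finset P) (hX : X.Nonempty)
    (U W : Finset P) (hU : U.Nonempty) (hW : W.Nonempty)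
    (hUs : ∀ x, V.jn x X ≤ U.sup' hU fun u => V.jn u X)
    (hWs : ∀ x, V.jn x X ≤ W.sup' hW fun w => V.jn w X)
    (a : P) :
    U.sup' hU (fun u => V.le a u ⊓ V.jn u X) =
      W.sup' hW (fun w => V.le a w ⊓ V.jn w X) := by

  have unique : ∀ u w : P, V.jn u X ⊓ V.jn w X ≤ V.le u w := by
    intro u w
    have h1 := V.jn_le u w X hX
    have h2 := V.jn_le w w X hX
    rw [V.le_refl, inf_top_eq] at h2
    have hw : V.jn w X ≤ X.inf' hX fun x => V.le x w := by
      calc V.jn w X = V.jn w X ⊓ X.inf' hX fun x => V.le x w := h2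
        _ ≤ _ := inf_le_right
    calc V.jn u X ⊓ V.jn w X
        ≤ V.jn u X ⊓ X.inf' hX fun x => V.le x w := inf_le_inf_left _ hw
      _ = V.jn u X ⊓ V.le u w := h1.symm
      _ ≤ V.le u w := inf_le_right
  have key : ∀ (U W : Finset P) (hU : U.Nonempty) (hW : W.Nonempty),
      (∀ x, V.jn x X ≤ W.sup' hW fun w => V.jn w X) →
      (U.sup' hU fun u => V.le a u ⊓ V.jn u X) ≤
        W.sup' hW fun w => V.le a w ⊓ V.jn w X := by
    intro U W hU hW hWs
    apply Finset.sup'_le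
    intro u _
    calc V.le a u ⊓ V.jn u X
        ≤ (V.le a u ⊓ V.jn u X) ⊓ W.sup' hW fun w => V.jn w X :=
          le_inf le_rfl (inf_le_right.trans (hWs u))
      _ = W.sup' hW fun w => (V.le a u ⊓ V.jn u X) ⊓ V.jn w X :=
          Finset.sup'_inf_distrib_left hW _ _
      _ ≤ W.sup' hW fun w => V.le a w ⊓ V.jn w X := by
          apply Finset.sup'_mono_fun
          intro w _
          have h1 : V.le a u ⊓ V.jn u X ⊓ V.jn w X ≤ V.le a u ⊓ V.le u w :=
            le_inf (inf_le_left.trans inf_le_left)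
              ((inf_le_inf_right _ inf_le_right).trans (unique u w))
          exact le_inf (h1.trans (V.le_trans a u w))
            (inf_le_right)
  exact le_antisymm (key U W hU hW hWs) (key W U hW hU hUs)
end

section
/- Let P be a finitely sampled D-valued partial lattice, let G be a prime filter of D, let a ∈ P and let X be a nonempty finite subset of P. Then the quotient partial lattice P/G satisfies [a] ≤ ⋁(X/G) if and only if ⟦a ≤ ⋁X⟧ ∈ G, where ⟦a ≤ ⋁X⟧ = ⋁_{u∈U}(⟦a≤u⟧ ∧ ⟦u=⋁X⟧) for any join-sample U of X. -/
open Finset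

section Aux
variable {D : Type*} [DistribLattice D] [OrderTop D]

lemma prime_sup'_mem {α : Type*} (G : Set D)
    (hGprime : ∀ x y, x ⊔ y ∈ G → x ∈ G ∨ y ∈ G)
    (s : Finset α) (hs : s.Nonempty) (f : α → D)
    (h : s.sup' hs f ∈ G) : ∃ i ∈ s, f i ∈ G := by
  induction hs using Finset.Nonempty.cons_induction with
  | singleton a => exact ⟨a, by simp, by simpa using h⟩
  | cons a s ha hs ih =>
      rw [Finset.sup'_cons hs] at h
      rcases hGprime _ _ h with h | h
      · exact ⟨a, Finset.mem_cons_self a s, h⟩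
      · obtain ⟨i, hi, hfi⟩ := ih h
        exact ⟨i, Finset.mem_cons_of_mem hi, hfi⟩

lemma filter_inf'_mem {α : Type*} (G : Set D)
    (hGinf : ∀ a ∈ G, ∀ b ∈ G, a ⊓ b ∈ G)
    (s : Finset α) (hs : s.Nonempty) (f : α → D)
    (h : ∀ i ∈ s, f i ∈ G) : s.inf' hs f ∈ G := by
  induction hs using Finset.Nonempty.cons_induction with
  | singleton a => simpa using h a (by simp)
  | cons a s ha hs ih =>
      rw [Finset.inf'_cons hs]
      exact hGinf _ (h a (Finset.mem_cons_self a s)) _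
        (ih fun i hi => h i (Finset.mem_cons_of_mem hi))

end Aux

/-- Basic Truth Lemma for `z ≤ ⋁Z`: for a finitely sampled `D`-valued
partial lattice `P` and a prime filter `G` of `D`, the quotient `P/G` satisfies
`[a] ≤ ⋁(X/G)` (i.e. there are representatives `a'`, `X'` with `⟦a'=⋁X'⟧ ∈ G`,
`X'/G = X/G` and `⟦a≤a'⟧ ∈ G`) iff `⟦a ≤ ⋁X⟧ ∈ G`, where `⟦a ≤ ⋁X⟧` is computed from
any join-sample `U` of `X`. -/
theorem truthLemma_le_sup {D P : Type*} [DistribLattice D] [OrderTop D] [Nonempty P]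
    (V : DValuedPartialLattice D P)
    (hFS : ∀ X : Finset P, X.Nonempty →
      (∃ U, IsJoinSample V X U) ∧ (∃ U, IsMeetSample V X U))
    (G : Set D) (hGne : G.Nonempty)
    (hGup : ∀ a ∈ G, ∀ b, a ≤ b → b ∈ G)
    (hGinf : ∀ a ∈ G, ∀ b ∈ G, a ⊓ b ∈ G)
    (hGproper : G ≠ Set.univ)
    (hGprime : ∀ x y, x ⊔ y ∈ G → x ∈ G ∨ y ∈ G)
    (a : P) (X : Finset P) (hX : X.Nonempty)
    (U : Finset P) (hU : U.Nonempty)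
    (hUs : ∀ x, V.jn x X ≤ U.sup' hU fun u => V.jn u X) :
    (∃ (a' : P) (X' : Finset P) (_ : X'.Nonempty),
        V.jn a' X' ∈ G ∧
        (∀ x ∈ X, ∃ x' ∈ X', eqv V.le x x' ∈ G) ∧
        (∀ x' ∈ X', ∃ x ∈ X, eqv V.le x x' ∈ G) ∧
        V.le a a' ∈ G) ↔
      U.sup' hU (fun u => V.le a u ⊓ V.jn u X) ∈ G := by
  have htop : (⊤ : D) ∈ G := by
    obtain ⟨g, hg⟩ := hGne
    exact hGup g hg ⊤ le_top
  constructor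
  · rintro ⟨a', X', hX', hjn, hXX', hX'X, hle⟩
    -- setEqv V.le X' hX' X hX ∈ G
    have hsub1 : subv V.le X' hX' X hX ∈ G := by
      refine filter_inf'_mem G hGinf _ _ _ ?_
      intro x' hx'
      obtain ⟨x, hx, hxe⟩ := hX'X x' hx'
      have : eqv V.le x' x ∈ G := by
        have : eqv V.le x x' = eqv V.le x' x := inf_comm _ _
        rwa [this] at hxe
      exact hGup _ this _ (Finset.le_sup' (eqv V.le x') hx)
    have hsub2 : subv V.le X hX X' hX' ∈ G := by
      refine filter_inf'_mem G hGinf _ _ _ ?_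
      intro x hx
      obtain ⟨x', hx', hxe⟩ := hXX' x hx
      exact hGup _ hxe _ (Finset.le_sup' (eqv V.le x) hx')
    have hseq : setEqv V.le X' hX' X hX ∈ G := hGinf _ hsub1 _ hsub2
    have hjnX : V.jn a' X ∈ G :=
      hGup _ (hGinf _ hjn _ hseq) _ (V.jn_congr a' X' X hX' hX)
    -- key inequality
    have hkey : ∀ u, V.le a a' ⊓ V.jn a' X ⊓ V.jn u X ≤ V.le a u ⊓ V.jn u X := by
      intro u
      have h1 : V.jn u X ≤ X.inf' hX fun x => V.le x u := by
        have := V.jn_le u u X hX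
        rw [V.le_refl, inf_top_eq] at this
        rw [this]; exact inf_le_right
      have h2 : V.jn a' X ⊓ V.jn u X ≤ V.le a' u := by
        calc V.jn a' X ⊓ V.jn u X ≤ V.jn a' X ⊓ X.inf' hX fun x => V.le x u :=
              inf_le_inf_left _ h1
          _ = V.jn a' X ⊓ V.le a' u := (V.jn_le a' u X hX).symm
          _ ≤ V.le a' u := inf_le_right
      refine le_inf ?_ (le_trans inf_le_right le_rfl)
      have : V.le a a' ⊓ V.jn a' X ⊓ V.jn u X ≤ V.le a a' ⊓ V.le a' u := by
        refine le_inf (le_trans inf_le_left inf_le_left) ?_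
        calc V.le a a' ⊓ V.jn a' X ⊓ V.jn u X
            ≤ V.jn a' X ⊓ V.jn u X := inf_le_inf_right _ inf_le_right
          _ ≤ V.le a' u := h2
      exact this.trans (V.le_trans a a' u)
    have hd : V.le a a' ⊓ V.jn a' X ∈ G := hGinf _ hle _ hjnX
    have hchain : V.le a a' ⊓ V.jn a' X ≤
        U.sup' hU fun u => V.le a u ⊓ V.jn u X := by
      have h3 : V.le a a' ⊓ V.jn a' X ≤
          (V.le a a' ⊓ V.jn a' X) ⊓ U.sup' hU fun u => V.jn u X :=
        le_inf le_rfl (le_trans inf_le_right (hUs a'))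
      have h4 : (V.le a a' ⊓ V.jn a' X) ⊓ (U.sup' hU fun u => V.jn u X) =
          U.sup' hU fun u => V.le a a' ⊓ V.jn a' X ⊓ V.jn u X :=
        Finset.sup'_inf_distrib_left hU _ _
      refine h3.trans (h4.le.trans ?_)
      exact Finset.sup'_mono_fun fun u _ => hkey u
    exact hGup _ hd _ hchain
  · intro h
    obtain ⟨u, hu, hmem⟩ := prime_sup'_mem G hGprime U hU _ h
    refine ⟨u, X, hX, hGup _ hmem _ inf_le_right, ?_, ?_, hGup _ hmem _ inf_le_left⟩
    · intro x hx
      exact ⟨x, hx, by simpa [eqv, V.le_refl] using htop⟩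
    · intro x hx
      exact ⟨x, hx, by simpa [eqv, V.le_refl] using htop⟩
end

section
/- Let P be a D-valued partial lattice with property (Id∨), and let f : P → D be an affine lower function given by f(a) = ⋁_{i<n}(⟦a≤u_i⟧ ∧ α_i). Then there exists a least ideal function g on P with f ≤ g (pointwise), namely g(a) = ⋁_{∅⊂I⊆n}(⟦a ∈ Id(u^{(I)})⟧ ∧ ⋀_{i∈I}α_i), where u^{(I)} = {u_i : i ∈ I}; moreover g is itself an affine lower function. -/
open Finset

variable {D P : Type*} [DistribLattice D] [OrderTop D]

/-- The Boolean value `⟦a ≤ ⋁Z⟧`, computed from a chosen join-sample `js Z` of `Z`. -/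
def bvLeJoin (V : DValuedPartialLattice D P)
    (js : Finset P → Finset P)
    (hjsne : ∀ Z : Finset P, Z.Nonempty → (js Z).Nonempty)
    (Z : Finset P) (hZ : Z.Nonempty) (a : P) : D :=
  (js Z).sup' (hjsne Z hZ) fun u => V.le a u ⊓ V.jn u Z

/-- The Boolean values `⟦a ∈ Id_n(X, U)⟧`, defined inductively:
`⟦a∈Id_0(X,U)⟧ = ⋁_{x∈X}⟦a≤x⟧` and
`⟦a∈Id_{n+1}(X,U)⟧ = ⟦a∈Id_n(X,U)⟧ ⊔ ⋁_{∅⊂Z⊆U}(⟦a≤⋁Z⟧ ⊓ ⋀_{z∈Z}⟦z∈Id_n(X,U)⟧)`. -/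
def bvIdN (V : DValuedPartialLattice D P)
    (js : Finset P → Finset P)
    (hjsne : ∀ Z : Finset P, Z.Nonempty → (js Z).Nonempty)
    (X U : Finset P) (hX : X.Nonempty) (hU : U.Nonempty) : ℕ → P → D
  | 0, a => X.sup' hX (V.le a)
  | n + 1, a =>
      bvIdN V js hjsne X U hX hU n a ⊔
        (U.powerset.filter fun Z => Z.Nonempty).attach.sup'
          ⟨⟨U, Finset.mem_filter.mpr
              ⟨Finset.mem_powerset.mpr (Finset.Subset.refl U), hU⟩⟩,
            Finset.mem_attach _ _⟩
          fun Z =>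
            bvLeJoin V js hjsne Z.1 (Finset.mem_filter.mp Z.2).2 a ⊓
              Z.1.inf' (Finset.mem_filter.mp Z.2).2
                fun z => bvIdN V js hjsne X U hX hU n z

/-- A lower function: `f(y) ⊓ ⟦x≤y⟧ ≤ f(x)`. -/
def IsLowerFct (V : DValuedPartialLattice D P) (f : P → D) : Prop :=
  ∀ x y, f y ⊓ V.le x y ≤ f x

/-- An ideal function: a lower function with `⟦a=⋁X⟧ ⊓ ⋀_{x∈X}f(x) ≤ f(a)`. -/
def IsIdealFct (V : DValuedPartialLattice D P) (f : P → D) : Prop :=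
  IsLowerFct V f ∧
    ∀ (a : P) (X : Finset P) (hX : X.Nonempty), V.jn a X ⊓ X.inf' hX f ≤ f a

/-
`⟦a ∈ Id(X)⟧` is the Boolean-valued ideal generated by `X`. Each stage `Id_n(X,U)` is built from
the values `⟦a ≤ x⟧`, `x ∈ X`, by joins only, so it lies below every ideal function above those
values; the (Id∨)-sample makes the stabilized value closed under joins, hence an ideal function.
In the summands `⟦a ∈ Id(u^{(I)})⟧ ⊓ ⋀_{i∈I} α_i` of `g` the first factor grows with `I` and the
second turns unions into meets, so a finite meet of values of `g` is dominated by the single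
summand indexed by the union; this makes `g` an ideal function. The summand for `I = {i}`
dominates `⟦a ≤ u_i⟧ ⊓ α_i`, and unfolding the recursion shows that `g` is a finite join of
functions `⟦a ≤ w⟧ ⊓ β`.
-/

theorem Finset.inf'_sup'_le_sup'_inf'_of_directed {α β ι : Type*} [DistribLattice β]
    {s : Finset ι} (hs : s.Nonempty) (F : ι → α → β) (w : ι → β)
    (hdir : ∀ i ∈ s, ∀ j ∈ s, ∃ k ∈ s,
      (∀ x, F i x ≤ F k x) ∧ (∀ x, F j x ≤ F k x) ∧ w i ⊓ w j ≤ w k)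
    {X : Finset α} (hX : X.Nonempty) :
    X.inf' hX (fun x => s.sup' hs fun i => F i x ⊓ w i) ≤
      s.sup' hs fun i => X.inf' hX (F i) ⊓ w i := by
  induction hX using Finset.Nonempty.cons_induction with
  | singleton x => simp only [inf'_singleton, le_refl]
  | cons x T hxT hT ih =>
    rw [inf'_cons hT]
    refine (inf_le_inf_left _ ih).trans ?_
    rw [sup'_inf_sup']
    refine sup'_le _ _ fun ij hij => ?_
    obtain ⟨hi, hj⟩ := mem_product.mp hij
    obtain ⟨k, hk, hik, hjk, hw⟩ := hdir ij.1 hi ij.2 hj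
    refine le_sup'_of_le _ hk ?_
    rw [inf'_cons hT]
    calc F ij.1 x ⊓ w ij.1 ⊓ (T.inf' hT (F ij.2) ⊓ w ij.2)
        = F ij.1 x ⊓ T.inf' hT (F ij.2) ⊓ (w ij.1 ⊓ w ij.2) := by ac_rfl
      _ ≤ F k x ⊓ T.inf' hT (F k) ⊓ w k :=
        inf_le_inf (inf_le_inf (hik x) (inf'_mono_fun fun y _ => hjk y)) hw

section BvIdN

variable (V : DValuedPartialLattice D P) (js : Finset P → Finset P)
  (hjsne : ∀ Z : Finset P, Z.Nonempty → (js Z).Nonempty)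

def IsJoinSampling : Prop :=
  ∀ (Z : Finset P) (hZ : Z.Nonempty) (x : P),
    V.jn x Z ≤ (js Z).sup' (hjsne Z hZ) fun w => V.jn w Z

variable {V js hjsne}

theorem bvLeJoin_inf_le_bvIdN_succ {X U Z : Finset P} (hX : X.Nonempty) (hU : U.Nonempty)
    (hZ : Z.Nonempty) (hZU : Z ⊆ U) (m : ℕ) (a : P) :
    bvLeJoin V js hjsne Z hZ a ⊓ Z.inf' hZ (bvIdN V js hjsne X U hX hU m) ≤
      bvIdN V js hjsne X U hX hU (m + 1) a :=
  le_sup_of_le_right <|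
    le_sup'_of_le _ (mem_attach _ ⟨Z, mem_filter.mpr ⟨mem_powerset.mpr hZU, hZ⟩⟩) le_rfl

theorem bvIdN_succ_inf_le {X U : Finset P} (hX : X.Nonempty) (hU : U.Nonempty) {m : ℕ} {a : P}
    {c d : D} (h₀ : bvIdN V js hjsne X U hX hU m a ⊓ c ≤ d)
    (h₁ : ∀ (Z : Finset P) (hZ : Z.Nonempty), Z ⊆ U →
      bvLeJoin V js hjsne Z hZ a ⊓ Z.inf' hZ (bvIdN V js hjsne X U hX hU m) ⊓ c ≤ d) :
    bvIdN V js hjsne X U hX hU (m + 1) a ⊓ c ≤ d := by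
  refine (inf_sup_right _ _ _).le.trans (sup_le h₀ ?_)
  refine (sup'_inf_distrib_right _ _ _).le.trans (sup'_le _ _ fun Z _ => ?_)
  exact h₁ Z.1 _ (mem_powerset.mp (mem_filter.mp Z.2).1)

theorem bvIdN_succ_le {X U : Finset P} (hX : X.Nonempty) (hU : U.Nonempty) {m : ℕ} {a : P}
    {d : D} (h₀ : bvIdN V js hjsne X U hX hU m a ≤ d)
    (h₁ : ∀ (Z : Finset P) (hZ : Z.Nonempty), Z ⊆ U →
      bvLeJoin V js hjsne Z hZ a ⊓ Z.inf' hZ (bvIdN V js hjsne X U hX hU m) ≤ d) :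
    bvIdN V js hjsne X U hX hU (m + 1) a ≤ d :=
  (le_inf le_rfl le_top).trans <| bvIdN_succ_inf_le hX hU (inf_le_left.trans h₀)
    fun Z hZ hZU => inf_le_left.trans (h₁ Z hZ hZU)

theorem bvIdN_monotone {X U : Finset P} (hX : X.Nonempty) (hU : U.Nonempty) (a : P) :
    Monotone fun m => bvIdN V js hjsne X U hX hU m a :=
  monotone_nat_of_le_succ fun _ => le_sup_left

theorem bvIdN_mono_left {X X' U : Finset P} (hX : X.Nonempty) (hX' : X'.Nonempty)
    (hU : U.Nonempty) (hXX' : X ⊆ X') (m : ℕ) (a : P) :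
    bvIdN V js hjsne X U hX hU m a ≤ bvIdN V js hjsne X' U hX' hU m a := by
  induction m generalizing a with
  | zero => exact sup'_mono _ hXX' hX
  | succ m ih =>
    refine bvIdN_succ_le hX hU ((ih a).trans le_sup_left) fun Z hZ hZU => ?_
    exact (inf_le_inf_left _ (inf'_mono_fun fun z _ => ih z)).trans
      (bvLeJoin_inf_le_bvIdN_succ hX' hU hZ hZU m a)

theorem bvIdN_mono_right {X U U' : Finset P} (hX : X.Nonempty) (hU : U.Nonempty)
    (hU' : U'.Nonempty) (hUU' : U ⊆ U') (m : ℕ) (a : P) :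
    bvIdN V js hjsne X U hX hU m a ≤ bvIdN V js hjsne X U' hX hU' m a := by
  induction m generalizing a with
  | zero => exact le_rfl
  | succ m ih =>
    refine bvIdN_succ_le hX hU ((ih a).trans le_sup_left) fun Z hZ hZU => ?_
    exact (inf_le_inf_left _ (inf'_mono_fun fun z _ => ih z)).trans
      (bvLeJoin_inf_le_bvIdN_succ hX hU' hZ (hZU.trans hUU') m a)

theorem isLowerFct_bvLeJoin (Z : Finset P) (hZ : Z.Nonempty) :
    IsLowerFct V (bvLeJoin V js hjsne Z hZ) := by
  intro a b
  rw [bvLeJoin, sup'_inf_distrib_right]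
  refine sup'_mono_fun fun w _ => ?_
  calc V.le b w ⊓ V.jn w Z ⊓ V.le a b = V.le a b ⊓ V.le b w ⊓ V.jn w Z := by ac_rfl
    _ ≤ V.le a w ⊓ V.jn w Z := inf_le_inf_right _ (V.le_trans a b w)

theorem isLowerFct_bvIdN (X U : Finset P) (hX : X.Nonempty) (hU : U.Nonempty) (m : ℕ) :
    IsLowerFct V (bvIdN V js hjsne X U hX hU m) := by
  induction m with
  | zero =>
    intro a b
    rw [bvIdN, bvIdN, sup'_inf_distrib_right]
    exact sup'_mono_fun fun x _ => by
      simpa only [inf_comm] using V.le_trans a b x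
  | succ m ih =>
    intro a b
    refine bvIdN_succ_inf_le hX hU ((ih a b).trans le_sup_left) fun Z hZ hZU => ?_
    refine le_trans ?_ (bvLeJoin_inf_le_bvIdN_succ hX hU hZ hZU m a)
    calc bvLeJoin V js hjsne Z hZ b ⊓ Z.inf' hZ (bvIdN V js hjsne X U hX hU m) ⊓ V.le a b
        = bvLeJoin V js hjsne Z hZ b ⊓ V.le a b ⊓ Z.inf' hZ (bvIdN V js hjsne X U hX hU m) := by
          ac_rfl
      _ ≤ _ := inf_le_inf_right _ (isLowerFct_bvLeJoin Z hZ a b)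

theorem jn_le_bvLeJoin (hjs : IsJoinSampling V js hjsne) (Z : Finset P) (hZ : Z.Nonempty)
    (a : P) : V.jn a Z ≤ bvLeJoin V js hjsne Z hZ a := by
  have hjn_le (w : P) : V.jn a Z ⊓ V.jn w Z ≤ V.le a w := by
    have hw : V.jn w Z ≤ Z.inf' hZ fun x => V.le x w := by
      simpa [V.le_refl] using (V.jn_le w w Z hZ).le
    calc V.jn a Z ⊓ V.jn w Z ≤ V.jn a Z ⊓ Z.inf' hZ fun x => V.le x w := inf_le_inf_left _ hw
      _ = V.jn a Z ⊓ V.le a w := (V.jn_le a w Z hZ).symm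
      _ ≤ V.le a w := inf_le_right
  calc V.jn a Z ≤ (js Z).sup' (hjsne Z hZ) fun w => V.jn a Z ⊓ V.jn w Z := by
        rw [← sup'_inf_distrib_left]
        exact le_inf le_rfl (hjs Z hZ a)
    _ ≤ bvLeJoin V js hjsne Z hZ a :=
        sup'_mono_fun fun w _ => le_inf (hjn_le w) inf_le_right

theorem bvLeJoin_inf_le_of_isIdealFct {h : P → D} (hh : IsIdealFct V h) (Z : Finset P)
    (hZ : Z.Nonempty) (a : P) : bvLeJoin V js hjsne Z hZ a ⊓ Z.inf' hZ h ≤ h a := by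
  rw [bvLeJoin, sup'_inf_distrib_right]
  refine sup'_le _ _ fun w _ => ?_
  calc V.le a w ⊓ V.jn w Z ⊓ Z.inf' hZ h ≤ h w ⊓ V.le a w := by
        rw [inf_assoc, inf_comm]
        exact inf_le_inf_right _ (hh.2 w Z hZ)
    _ ≤ h a := hh.1 a w

theorem bvIdN_inf_le_of_isIdealFct {h : P → D} (hh : IsIdealFct V h) {X : Finset P}
    (hX : X.Nonempty) {c : D} (hXh : ∀ x ∈ X, ∀ a, V.le a x ⊓ c ≤ h a) (U : Finset P)
    (hU : U.Nonempty) (m : ℕ) (a : P) : bvIdN V js hjsne X U hX hU m a ⊓ c ≤ h a := by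
  induction m generalizing a with
  | zero =>
    rw [bvIdN, sup'_inf_distrib_right]
    exact sup'_le _ _ fun x hx => hXh x hx a
  | succ m ih =>
    refine bvIdN_succ_inf_le hX hU (ih a) fun Z hZ _ => ?_
    calc bvLeJoin V js hjsne Z hZ a ⊓ Z.inf' hZ (bvIdN V js hjsne X U hX hU m) ⊓ c
        ≤ bvLeJoin V js hjsne Z hZ a ⊓ Z.inf' hZ h := by
          rw [inf_assoc]
          exact inf_le_inf_left _
            (le_inf' _ _ fun z hz => (inf_le_inf_right c (inf'_le _ hz)).trans (ih z))
      _ ≤ h a := bvLeJoin_inf_le_of_isIdealFct hh Z hZ a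

end BvIdN

section Affine

variable (V : DValuedPartialLattice D P)

def affineFct {n : ℕ} (hn : 0 < n) (u : Fin n → P) (α : Fin n → D) (a : P) : D :=
  (univ : Finset (Fin n)).sup' ⟨⟨0, hn⟩, mem_univ _⟩ fun i => V.le a (u i) ⊓ α i

/-- Affine lower functions, with the pairs `(u_i, α_i)` collected in a finite set. -/
def IsAffineFct (F : P → D) : Prop :=
  ∃ (s : Finset (P × D)) (hs : s.Nonempty), ∀ a, F a = s.sup' hs fun p => V.le a p.1 ⊓ p.2

variable {V}

theorem isAffineFct_le (w : P) : IsAffineFct V fun a => V.le a w :=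
  ⟨{(w, ⊤)}, singleton_nonempty _, fun a => by simp⟩

theorem IsAffineFct.sup {F G : P → D} (hF : IsAffineFct V F) (hG : IsAffineFct V G) :
    IsAffineFct V (F ⊔ G) := by
  classical
  obtain ⟨s, hs, hFs⟩ := hF
  obtain ⟨t, ht, hGt⟩ := hG
  exact ⟨s ∪ t, hs.mono subset_union_left, fun a => by
    rw [Pi.sup_apply, hFs, hGt, sup'_union hs ht]⟩

theorem IsAffineFct.inf_const {F : P → D} (hF : IsAffineFct V F) (c : D) :
    IsAffineFct V fun a => F a ⊓ c := by
  classical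
  obtain ⟨s, hs, hFs⟩ := hF
  refine ⟨s.image fun p => (p.1, p.2 ⊓ c), hs.image _, fun a => ?_⟩
  show F a ⊓ c = _
  rw [sup'_image, hFs a, sup'_inf_distrib_right]
  exact sup'_congr _ rfl fun p _ => inf_assoc _ _ _

theorem IsAffineFct.finset_sup' {ι : Type*} {s : Finset ι} (hs : s.Nonempty) {F : ι → P → D}
    (hF : ∀ i ∈ s, IsAffineFct V (F i)) : IsAffineFct V fun a => s.sup' hs fun i => F i a := by
  convert sup'_induction hs F (p := IsAffineFct V) (fun _ h₁ _ h₂ => h₁.sup h₂) hF using 1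
  funext a
  exact (Finset.sup'_apply hs F a).symm

theorem IsAffineFct.exists_fin {F : P → D} (hF : IsAffineFct V F) :
    ∃ (m : ℕ) (hm : 0 < m) (v : Fin m → P) (β : Fin m → D), ∀ a, F a = affineFct V hm v β a := by
  obtain ⟨s, hs, hFs⟩ := hF
  let e := s.equivFin
  refine ⟨s.card, hs.card_pos, fun i => (e.symm i).1.1, fun i => (e.symm i).1.2, fun a => ?_⟩
  rw [hFs]
  refine le_antisymm (sup'_le _ _ fun p hp => le_sup'_of_le _ (mem_univ (e ⟨p, hp⟩)) ?_)
    (sup'_le _ _ fun i _ => le_sup' (fun p => V.le a p.1 ⊓ p.2) (e.symm i).2)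
  simp only [Equiv.symm_apply_apply, le_refl]

theorem isAffineFct_bvLeJoin {js : Finset P → Finset P}
    {hjsne : ∀ Z : Finset P, Z.Nonempty → (js Z).Nonempty} (Z : Finset P) (hZ : Z.Nonempty) :
    IsAffineFct V (bvLeJoin V js hjsne Z hZ) :=
  IsAffineFct.finset_sup' _ fun w _ => (isAffineFct_le w).inf_const _

theorem isAffineFct_bvIdN {js : Finset P → Finset P}
    {hjsne : ∀ Z : Finset P, Z.Nonempty → (js Z).Nonempty} (X U : Finset P) (hX : X.Nonempty)
    (hU : U.Nonempty) (m : ℕ) : IsAffineFct V (bvIdN V js hjsne X U hX hU m) := by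
  induction m with
  | zero => exact IsAffineFct.finset_sup' hX fun x _ => isAffineFct_le x
  | succ m ih =>
    exact ih.sup <| IsAffineFct.finset_sup' _ fun Z _ =>
      (isAffineFct_bvLeJoin Z.1 _).inf_const _

end Affine

section Id

variable (V : DValuedPartialLattice D P) (js : Finset P → Finset P)
  (hjsne : ∀ Z : Finset P, Z.Nonempty → (js Z).Nonempty)
  (idU : Finset P → Finset P) (idn : Finset P → ℕ)
  (hidUne : ∀ X : Finset P, X.Nonempty → (idU X).Nonempty)

/-- The stabilized value `⟦a ∈ Id(X)⟧`. -/
def bvId (X : Finset P) (hX : X.Nonempty) (a : P) : D :=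
  bvIdN V js hjsne X (idU X) hX (hidUne X hX) (idn X) a

/-- (Id∨): `idU X` is an (Id∨)-sample of `X` with index `idn X`. -/
def IsIdSampling : Prop :=
  ∀ (X : Finset P) (hX : X.Nonempty) (Y : Finset P) (hUY : idU X ⊆ Y) (a : P),
    bvIdN V js hjsne X (idU X) hX (hidUne X hX) (idn X) a =
      bvIdN V js hjsne X Y hX (Finset.Nonempty.mono hUY (hidUne X hX)) (idn X + 1) a

variable {V js hjsne idU idn hidUne}

theorem bvLeJoin_inf_bvId_le (hstab : IsIdSampling V js hjsne idU idn hidUne)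
    {X : Finset P} (hX : X.Nonempty) (Z : Finset P) (hZ : Z.Nonempty) (a : P) :
    bvLeJoin V js hjsne Z hZ a ⊓ Z.inf' hZ (bvId V js hjsne idU idn hidUne X hX) ≤
      bvId V js hjsne idU idn hidUne X hX a := by
  classical
  have hY : (idU X ∪ Z).Nonempty := hZ.mono subset_union_right
  calc _ ≤ bvLeJoin V js hjsne Z hZ a ⊓
        Z.inf' hZ (bvIdN V js hjsne X (idU X ∪ Z) hX hY (idn X)) :=
        inf_le_inf_left _ <| inf'_mono_fun fun z _ =>
          bvIdN_mono_right hX _ hY subset_union_left _ z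
    _ ≤ bvIdN V js hjsne X (idU X ∪ Z) hX hY (idn X + 1) a :=
        bvLeJoin_inf_le_bvIdN_succ hX hY hZ subset_union_right _ a
    _ = bvId V js hjsne idU idn hidUne X hX a := (hstab X hX _ subset_union_left a).symm

theorem bvIdN_le_bvId (hstab : IsIdSampling V js hjsne idU idn hidUne) {X : Finset P}
    (hX : X.Nonempty) (U : Finset P) (hU : U.Nonempty) (m : ℕ) (a : P) :
    bvIdN V js hjsne X U hX hU m a ≤ bvId V js hjsne idU idn hidUne X hX a := by
  induction m generalizing a with
  | zero => exact bvIdN_monotone hX (hidUne X hX) a (Nat.zero_le (idn X))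
  | succ m ih =>
    refine bvIdN_succ_le hX hU (ih a) fun Z hZ _ => ?_
    exact (inf_le_inf_left _ (inf'_mono_fun fun z _ => ih z)).trans
      (bvLeJoin_inf_bvId_le hstab hX Z hZ a)

theorem le_bvId (hstab : IsIdSampling V js hjsne idU idn hidUne) {X : Finset P}
    (hX : X.Nonempty) {x : P} (hx : x ∈ X) (a : P) :
    V.le a x ≤ bvId V js hjsne idU idn hidUne X hX a :=
  (le_sup' (V.le a) hx).trans (bvIdN_le_bvId hstab hX (idU X) (hidUne X hX) 0 a)

theorem bvId_mono (hstab : IsIdSampling V js hjsne idU idn hidUne) {X X' : Finset P}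
    (hX : X.Nonempty) (hX' : X'.Nonempty) (hXX' : X ⊆ X') (a : P) :
    bvId V js hjsne idU idn hidUne X hX a ≤ bvId V js hjsne idU idn hidUne X' hX' a :=
  (bvIdN_mono_left hX hX' (hidUne X hX) hXX' (idn X) a).trans
    (bvIdN_le_bvId hstab hX' _ _ _ a)

theorem isIdealFct_bvId (hjs : IsJoinSampling V js hjsne)
    (hstab : IsIdSampling V js hjsne idU idn hidUne) (X : Finset P) (hX : X.Nonempty) :
    IsIdealFct V (bvId V js hjsne idU idn hidUne X hX) :=
  ⟨isLowerFct_bvIdN _ _ _ _ _, fun a Z hZ =>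
    (inf_le_inf_right _ (jn_le_bvLeJoin hjs Z hZ a)).trans
      (bvLeJoin_inf_bvId_le hstab hX Z hZ a)⟩

end Id

def nonemptySubsets (n : ℕ) : Finset (Finset (Fin n)) :=
  (univ : Finset (Fin n)).powerset.filter fun I => I.Nonempty

theorem mem_nonemptySubsets {n : ℕ} {I : Finset (Fin n)} :
    I ∈ nonemptySubsets n ↔ I.Nonempty := by
  simp [nonemptySubsets]

theorem attach_nonemptySubsets_nonempty {n : ℕ} (hn : 0 < n) :
    (nonemptySubsets n).attach.Nonempty :=
  attach_nonempty_iff.mpr ⟨univ, mem_nonemptySubsets.mpr ⟨⟨0, hn⟩, mem_univ _⟩⟩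

section IdealHull

variable [DecidableEq P] (V : DValuedPartialLattice D P) (js : Finset P → Finset P)
  (hjsne : ∀ Z : Finset P, Z.Nonempty → (js Z).Nonempty)
  (idU : Finset P → Finset P) (idn : Finset P → ℕ)
  (hidUne : ∀ X : Finset P, X.Nonempty → (idU X).Nonempty)
  {n : ℕ} (hn : 0 < n) (u : Fin n → P) (α : Fin n → D)

def idealHull (a : P) : D :=
  (nonemptySubsets n).attach.sup' (attach_nonemptySubsets_nonempty hn)
    fun I => bvId V js hjsne idU idn hidUne (I.1.image u)
        ((mem_nonemptySubsets.mp I.2).image u) a ⊓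
      I.1.inf' (mem_nonemptySubsets.mp I.2) α

theorem idealHull_le_of_isIdealFct {h : P → D} (hh : IsIdealFct V h)
    (hfh : ∀ a, affineFct V hn u α a ≤ h a) (a : P) :
    idealHull V js hjsne idU idn hidUne hn u α a ≤ h a := by
  refine sup'_le _ _ fun ⟨I, hI⟩ _ => ?_
  have hI' := mem_nonemptySubsets.mp hI
  refine bvIdN_inf_le_of_isIdealFct hh (hI'.image u) (fun x hx b => ?_) _ _ _ a
  obtain ⟨i, hi, rfl⟩ := mem_image.mp hx
  exact (inf_le_inf_left _ (inf'_le α hi)).trans ((le_sup' _ (mem_univ i)).trans (hfh b))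

theorem isAffineFct_idealHull : IsAffineFct V (idealHull V js hjsne idU idn hidUne hn u α) :=
  IsAffineFct.finset_sup' _ fun _ _ => (isAffineFct_bvIdN _ _ _ _ _).inf_const _

variable {V js hjsne idU idn hidUne}

theorem inf'_idealHull_le (hstab : IsIdSampling V js hjsne idU idn hidUne) {X : Finset P}
    (hX : X.Nonempty) :
    X.inf' hX (idealHull V js hjsne idU idn hidUne hn u α) ≤
      (nonemptySubsets n).attach.sup' (attach_nonemptySubsets_nonempty hn) fun I =>
        X.inf' hX (bvId V js hjsne idU idn hidUne (I.1.image u)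
          ((mem_nonemptySubsets.mp I.2).image u)) ⊓ I.1.inf' (mem_nonemptySubsets.mp I.2) α := by
  refine inf'_sup'_le_sup'_inf'_of_directed _ _ _ ?_ hX
  rintro ⟨I, hI⟩ - ⟨J, hJ⟩ -
  have hIJ : I ∪ J ∈ nonemptySubsets n :=
    mem_nonemptySubsets.mpr ((mem_nonemptySubsets.mp hI).mono subset_union_left)
  exact ⟨⟨I ∪ J, hIJ⟩, mem_attach _ _,
    bvId_mono hstab _ _ (image_subset_image subset_union_left),
    bvId_mono hstab _ _ (image_subset_image subset_union_right),
    (inf'_union (mem_nonemptySubsets.mp hI) (mem_nonemptySubsets.mp hJ) α).ge⟩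

theorem isIdealFct_idealHull (hjs : IsJoinSampling V js hjsne)
    (hstab : IsIdSampling V js hjsne idU idn hidUne) :
    IsIdealFct V (idealHull V js hjsne idU idn hidUne hn u α) := by
  have hideal (I : Finset (Fin n)) (hI : I.Nonempty) :=
    isIdealFct_bvId hjs hstab (I.image u) (hI.image u)
  refine ⟨fun a b => ?_, fun a X hX => ?_⟩
  · refine (sup'_inf_distrib_right _ _ _).le.trans (sup'_mono_fun fun I _ => ?_)
    rw [inf_right_comm]
    exact inf_le_inf_right _ ((hideal I.1 (mem_nonemptySubsets.mp I.2)).1 a b)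
  · refine (inf_le_inf_left _ (inf'_idealHull_le hn u α hstab hX)).trans
      ((sup'_inf_distrib_left _ _ _).le.trans (sup'_mono_fun fun I _ => ?_))
    rw [← inf_assoc]
    exact inf_le_inf_right _ ((hideal I.1 (mem_nonemptySubsets.mp I.2)).2 a X hX)

theorem affineFct_le_idealHull (hstab : IsIdSampling V js hjsne idU idn hidUne) (a : P) :
    affineFct V hn u α a ≤ idealHull V js hjsne idU idn hidUne hn u α a := by
  refine sup'_le _ _ fun i _ => ?_
  have hi : {i} ∈ nonemptySubsets n := mem_nonemptySubsets.mpr (singleton_nonempty i)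
  refine le_sup'_of_le _ (mem_attach _ ⟨{i}, hi⟩) (inf_le_inf ?_ ?_)
  · exact le_bvId hstab _ (mem_image_of_mem u (mem_singleton_self i)) a
  · simp

end IdealHull

theorem least_ideal_function_above_affine_general [DecidableEq P]
    (V : DValuedPartialLattice D P)
    -- `P` is finitely join-sampled, with a chosen join-sample `js Z` for each `Z`
    (js : Finset P → Finset P)
    (hjsne : ∀ Z : Finset P, Z.Nonempty → (js Z).Nonempty)
    (hjs : ∀ (Z : Finset P) (hZ : Z.Nonempty) (x : P),
      V.jn x Z ≤ (js Z).sup' (hjsne Z hZ) fun w => V.jn w Z)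
    -- (Id∨): every nonempty finite `X` has an (Id∨)-sample `idU X` with index `idn X`
    (idU : Finset P → Finset P) (idn : Finset P → ℕ)
    (hidUne : ∀ X : Finset P, X.Nonempty → (idU X).Nonempty)
    (hstab : ∀ (X : Finset P) (hX : X.Nonempty) (Y : Finset P) (hUY : idU X ⊆ Y) (a : P),
      bvIdN V js hjsne X (idU X) hX (hidUne X hX) (idn X) a =
        bvIdN V js hjsne X Y hX (Finset.Nonempty.mono hUY (hidUne X hX)) (idn X + 1) a)
    -- the affine lower function `f`
    (n : ℕ) (hn : 0 < n) (u : Fin n → P) (α : Fin n → D) :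
    let f : P → D := fun a =>
      (Finset.univ : Finset (Fin n)).sup' ⟨⟨0, hn⟩, Finset.mem_univ _⟩
        fun i => V.le a (u i) ⊓ α i
    let g : P → D := fun a =>
      ((Finset.univ : Finset (Fin n)).powerset.filter fun I => I.Nonempty).attach.sup'
        ⟨⟨Finset.univ, Finset.mem_filter.mpr
            ⟨Finset.mem_powerset.mpr (Finset.Subset.refl _),
              ⟨⟨0, hn⟩, Finset.mem_univ _⟩⟩⟩,
          Finset.mem_attach _ _⟩
        fun I =>
          bvIdN V js hjsne (I.1.image u) (idU (I.1.image u))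
            (Finset.Nonempty.image (Finset.mem_filter.mp I.2).2 u)
            (hidUne _ (Finset.Nonempty.image (Finset.mem_filter.mp I.2).2 u))
            (idn (I.1.image u)) a ⊓
          I.1.inf' (Finset.mem_filter.mp I.2).2 α
    IsIdealFct V g ∧
      (∀ a, f a ≤ g a) ∧
      (∀ h : P → D, IsIdealFct V h → (∀ a, f a ≤ h a) → ∀ a, g a ≤ h a) ∧
      (∃ (m : ℕ) (hm : 0 < m) (v : Fin m → P) (β : Fin m → D), ∀ a,
        g a = (Finset.univ : Finset (Fin m)).sup' ⟨⟨0, hm⟩, Finset.mem_univ _⟩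
          fun i => V.le a (v i) ⊓ β i) := by
  exact ⟨isIdealFct_idealHull hn u α hjs hstab, affineFct_le_idealHull hn u α hstab,
    fun _ hh hfh => idealHull_le_of_isIdealFct V js hjsne idU idn hidUne hn u α hh hfh,
    (isAffineFct_idealHull V js hjsne idU idn hidUne hn u α).exists_fin⟩

/-- if `P` is a `D`-valued partial lattice with (Id∨) and
`f(a) = ⋁_{i<n}(⟦a≤u_i⟧ ⊓ α_i)` is an affine lower function, then
`g(a) = ⋁_{∅⊂I⊆n}(⟦a ∈ Id(u^{(I)})⟧ ⊓ ⋀_{i∈I}α_i)` is the least ideal function above `f`,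
and `g` is itself an affine lower function. -/
theorem least_ideal_function_above_affine [Nonempty P] [DecidableEq P]
    (V : DValuedPartialLattice D P)
    -- `P` is finitely join-sampled, with a chosen join-sample `js Z` for each `Z`
    (js : Finset P → Finset P)
    (hjsne : ∀ Z : Finset P, Z.Nonempty → (js Z).Nonempty)
    (hjs : ∀ (Z : Finset P) (hZ : Z.Nonempty) (x : P),
      V.jn x Z ≤ (js Z).sup' (hjsne Z hZ) fun w => V.jn w Z)
    -- (Id∨): every nonempty finite `X` has an (Id∨)-sample `idU X` with index `idn X`
    (idU : Finset P → Finset P) (idn : Finset P → ℕ)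
    (hidUne : ∀ X : Finset P, X.Nonempty → (idU X).Nonempty)
    (hstab : ∀ (X : Finset P) (hX : X.Nonempty) (Y : Finset P) (hUY : idU X ⊆ Y) (a : P),
      bvIdN V js hjsne X (idU X) hX (hidUne X hX) (idn X) a =
        bvIdN V js hjsne X Y hX (Finset.Nonempty.mono hUY (hidUne X hX)) (idn X + 1) a)
    -- the affine lower function `f`
    (n : ℕ) (hn : 0 < n) (u : Fin n → P) (α : Fin n → D) :
    let f : P → D := fun a =>
      (Finset.univ : Finset (Fin n)).sup' ⟨⟨0, hn⟩, Finset.mem_univ _⟩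
        fun i => V.le a (u i) ⊓ α i
    let g : P → D := fun a =>
      ((Finset.univ : Finset (Fin n)).powerset.filter fun I => I.Nonempty).attach.sup'
        ⟨⟨Finset.univ, Finset.mem_filter.mpr
            ⟨Finset.mem_powerset.mpr (Finset.Subset.refl _),
              ⟨⟨0, hn⟩, Finset.mem_univ _⟩⟩⟩,
          Finset.mem_attach _ _⟩
        fun I =>
          bvIdN V js hjsne (I.1.image u) (idU (I.1.image u))
            (Finset.Nonempty.image (Finset.mem_filter.mp I.2).2 u)
            (hidUne _ (Finset.Nonempty.image (Finset.mem_filter.mp I.2).2 u))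
            (idn (I.1.image u)) a ⊓
          I.1.inf' (Finset.mem_filter.mp I.2).2 α
    IsIdealFct V g ∧
      (∀ a, f a ≤ g a) ∧
      (∀ h : P → D, IsIdealFct V h → (∀ a, f a ≤ h a) → ∀ a, g a ≤ h a) ∧
      (∃ (m : ℕ) (hm : 0 < m) (v : Fin m → P) (β : Fin m → D), ∀ a,
        g a = (Finset.univ : Finset (Fin m)).sup' ⟨⟨0, hm⟩, Finset.mem_univ _⟩
          fun i => V.le a (v i) ⊓ β i) :=
  least_ideal_function_above_affine_general V js hjsne hjs idU idn hidUne hstab n hn u α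
end

section
/- Let P be a D-valued poset, let f(x) = ⋁_{i<m}(⟦u_i≤x⟧ ∧ α_i) be an affine upper function and g(x) = ⋁_{j<n}(⟦x≤v_j⟧ ∧ β_j) an affine lower function. Set γ = ⋁_{i<m, j<n}(α_i ∧ β_j ∧ ⟦u_i≤v_j⟧). Then γ is the finitely-attained supremum of the family (f(x) ∧ g(x))_{x∈P}: that is, f(x) ∧ g(x) ≤ γ for all x ∈ P, and γ = ⋁_{j<n}(f(v_j) ∧ g(v_j)). -/
open Finset

/-- for an affine upper function `f(x) = ⋁_{i<m}(⟦u_i≤x⟧ ⊓ α_i)` and an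
affine lower function `g(x) = ⋁_{j<n}(⟦x≤v_j⟧ ⊓ β_j)` on a `D`-valued poset, the element
`γ = ⋁_{i,j}(α_i ⊓ β_j ⊓ ⟦u_i≤v_j⟧)` is the finitely attained supremum of the family
`(f(x) ⊓ g(x))_{x∈P}`: each `f(x) ⊓ g(x)` is `≤ γ`, and `γ = ⋁_{j<n}(f(v_j) ⊓ g(v_j))`. -/
theorem affine_upper_lower_gamma {D P : Type*} [DistribLattice D] [OrderTop D] [Nonempty P]
    (le : P → P → D)
    (le_refl : ∀ a, le a a = ⊤)
    (le_trans : ∀ a b c, le a b ⊓ le b c ≤ le a c)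
    (m n : ℕ) (hm : 0 < m) (hn : 0 < n)
    (u : Fin m → P) (v : Fin n → P) (α : Fin m → D) (β : Fin n → D) :
    let f : P → D := fun x =>
      (Finset.univ : Finset (Fin m)).sup' ⟨⟨0, hm⟩, Finset.mem_univ _⟩
        fun i => le (u i) x ⊓ α i
    let g : P → D := fun x =>
      (Finset.univ : Finset (Fin n)).sup' ⟨⟨0, hn⟩, Finset.mem_univ _⟩
        fun j => le x (v j) ⊓ β j
    let γ : D :=
      (Finset.univ : Finset (Fin m × Fin n)).sup'
        ⟨(⟨0, hm⟩, ⟨0, hn⟩), Finset.mem_univ _⟩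
        fun p => α p.1 ⊓ β p.2 ⊓ le (u p.1) (v p.2)
    (∀ x, f x ⊓ g x ≤ γ) ∧
      γ = (Finset.univ : Finset (Fin n)).sup' ⟨⟨0, hn⟩, Finset.mem_univ _⟩
        fun j => f (v j) ⊓ g (v j) := by
  intro f g γ
  have h1 : ∀ x, f x ⊓ g x ≤ γ := by
    intro x
    rw [show f x ⊓ g x = _ from Finset.sup'_inf_sup' _ _ _ _]
    apply Finset.sup'_le
    intro p _
    apply Finset.le_sup'_of_le (f := fun p : Fin m × Fin n => α p.1 ⊓ β p.2 ⊓ le (u p.1) (v p.2))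
      (b := p) (Finset.mem_univ _)
    have htr : le (u p.1) x ⊓ le x (v p.2) ≤ le (u p.1) (v p.2) := le_trans _ _ _
    calc le (u p.1) x ⊓ α p.1 ⊓ (le x (v p.2) ⊓ β p.2)
        ≤ (α p.1 ⊓ β p.2) ⊓ (le (u p.1) x ⊓ le x (v p.2)) := by
          refine le_inf (le_inf ?_ ?_) (le_inf ?_ ?_)
          · exact inf_le_left.trans inf_le_right
          · exact inf_le_right.trans inf_le_right
          · exact inf_le_left.trans inf_le_left
          · exact inf_le_right.trans inf_le_left
      _ ≤ α p.1 ⊓ β p.2 ⊓ le (u p.1) (v p.2) := inf_le_inf_left _ htr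
  refine ⟨h1, le_antisymm ?_ ?_⟩
  · apply Finset.sup'_le
    intro p _
    refine Finset.le_sup'_of_le _ (b := p.2) (Finset.mem_univ _) (le_inf ?_ ?_)
    · refine le_trans' (Finset.le_sup' (b := p.1) _ (Finset.mem_univ _)) ?_
      exact le_inf (inf_le_right) (inf_le_left.trans inf_le_left)
    · refine le_trans' (Finset.le_sup' (b := p.2) _ (Finset.mem_univ _)) ?_
      simp [le_refl]
      exact inf_le_left.trans inf_le_right
  · exact Finset.sup'_le _ _ fun j _ => h1 (v j)
end

section
/- Let ⟨K, P, Q⟩ be a standard V-formation of D-measured partial lattices (K a finite lattice, K = P ∩ Q, and the inclusions K ↪ P, K ↪ Q are isometries). Define Boolean values on R = P ∪ Q by: ⟦x≤y⟧_R = ⟦x≤y⟧_P if x,y ∈ P; = ⟦x≤y⟧_Q if x,y ∈ Q; = ⋁_{z∈K}(⟦x≤z⟧_P ∧ ⟦z≤y⟧_Q) if x ∈ P, y ∈ Q; and symmetrically if x ∈ Q, y ∈ P. Then these values are mutually compatible (on overlaps the clauses agree), and ⟨R, ⟦·≤·⟧_R⟩ is a D-valued poset, i.e., ⟦a≤a⟧_R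 = 1 and ⟦a≤b⟧_R ∧ ⟦b≤c⟧_R ≤ ⟦a≤c⟧_R for all a,b,c ∈ R. -/
open Finset

open scoped Classical

/-- A `D`-measured partial lattice living on the subset `S` of an ambient set `R`:
a partial lattice structure on `S` together with Boolean values `⟦x ≤ y⟧ ∈ D` making `S`
a `D`-valued poset, such that `x ≤ y` implies `⟦x≤y⟧ = ⊤`, `a = ⋁X` implies
`⟦a≤b⟧ = ⋀_{x∈X}⟦x≤b⟧`, and `a = ⋀X` implies `⟦b≤a⟧ = ⋀_{x∈X}⟦b≤x⟧`. -/
structure MeasuredOn (D R : Type*) [DistribLattice D] [OrderTop D] (S : Set R) where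
  le : R → R → Prop
  bv : R → R → D
  le_refl : ∀ x ∈ S, le x x
  le_trans : ∀ x ∈ S, ∀ y ∈ S, ∀ z ∈ S, le x y → le y z → le x z
  le_antisymm : ∀ x ∈ S, ∀ y ∈ S, le x y → le y x → x = y
  bv_refl : ∀ x ∈ S, bv x x = ⊤
  bv_trans : ∀ x ∈ S, ∀ y ∈ S, ∀ z ∈ S, bv x y ⊓ bv y z ≤ bv x z
  bv_of_le : ∀ x ∈ S, ∀ y ∈ S, le x y → bv x y = ⊤
  join : Finset R → Option R
  meet : Finset R → Option R
  join_spec : ∀ (X : Finset R) (a : R), join X = some a →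
    X.Nonempty ∧ ↑X ⊆ S ∧ a ∈ S ∧ (∀ x ∈ X, le x a) ∧
      ∀ b ∈ S, (∀ x ∈ X, le x b) → le a b
  meet_spec : ∀ (X : Finset R) (a : R), meet X = some a →
    X.Nonempty ∧ ↑X ⊆ S ∧ a ∈ S ∧ (∀ x ∈ X, le a x) ∧
      ∀ b ∈ S, (∀ x ∈ X, le b x) → le b a
  bv_join : ∀ (X : Finset R) (a : R), join X = some a → ∀ (hX : X.Nonempty), ∀ b ∈ S,
    bv a b = X.inf' hX fun x => bv x b
  bv_meet : ∀ (X : Finset R) (a : R), meet X = some a → ∀ (hX : X.Nonempty), ∀ b ∈ S,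
    bv b a = X.inf' hX fun x => bv b x

/-- The Boolean values on the amalgam `R = P ⨿_K Q`: on `P` and on `Q` they restrict to the
given values, and in the mixed cases they are given by
`⟦x≤y⟧ = ⋁_{z∈K}(⟦x≤z⟧_P ⊓ ⟦z≤y⟧_Q)` (and symmetrically). -/
noncomputable def bvAmalgam {D R : Type*} [DistribLattice D] [OrderTop D]
    {P Q : Set R} (MP : MeasuredOn D R P) (MQ : MeasuredOn D R Q)
    (K : Finset R) (hKne : K.Nonempty) (x y : R) : D :=
  if x ∈ P ∧ y ∈ P then MP.bv x y
  else if x ∈ Q ∧ y ∈ Q then MQ.bv x y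
  else if x ∈ P ∧ y ∈ Q then K.sup' hKne fun z => MP.bv x z ⊓ MQ.bv z y
  else K.sup' hKne fun z => MQ.bv x z ⊓ MP.bv z y

section Aux
variable {D R : Type*} [DistribLattice D] [OrderTop D] {P Q : Set R}

/-- compatibility claim 1 (generic in P,Q): for `x ∈ P`, `y ∈ K`,
`MP.bv x y = ⋁_{z∈K} MP.bv x z ⊓ MQ.bv z y`. -/
theorem claim1 (MP : MeasuredOn D R P) (MQ : MeasuredOn D R Q)
    (K : Finset R) (hKne : K.Nonempty) (hKP : ∀ z ∈ K, z ∈ P) (hKQ : ∀ z ∈ K, z ∈ Q)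
    (hagree_bv : ∀ x ∈ K, ∀ y ∈ K, MP.bv x y = MQ.bv x y)
    (x : R) (hx : x ∈ P) (y : R) (hy : y ∈ K) :
    MP.bv x y = K.sup' hKne fun z => MP.bv x z ⊓ MQ.bv z y := by
  apply le_antisymm
  · have h := Finset.le_sup' (fun z => MP.bv x z ⊓ MQ.bv z y) hy
    simpa [MQ.bv_refl y (hKQ y hy)] using h
  · apply Finset.sup'_le
    intro z hz
    rw [← hagree_bv z hz y hy]
    exact MP.bv_trans x hx z (hKP z hz) y (hKP y hy)

/-- compatibility claim 2 (generic): for `x ∈ K`, `y ∈ Q`,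
`MQ.bv x y = ⋁_{z∈K} MP.bv x z ⊓ MQ.bv z y`. -/
theorem claim2 (MP : MeasuredOn D R P) (MQ : MeasuredOn D R Q)
    (K : Finset R) (hKne : K.Nonempty) (hKP : ∀ z ∈ K, z ∈ P) (hKQ : ∀ z ∈ K, z ∈ Q)
    (hagree_bv : ∀ x ∈ K, ∀ y ∈ K, MP.bv x y = MQ.bv x y)
    (x : R) (hx : x ∈ K) (y : R) (hy : y ∈ Q) :
    MQ.bv x y = K.sup' hKne fun z => MP.bv x z ⊓ MQ.bv z y := by
  apply le_antisymm
  · have h := Finset.le_sup' (fun z => MP.bv x z ⊓ MQ.bv z y) hx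
    simpa [MP.bv_refl x (hKP x hx)] using h
  · apply Finset.sup'_le
    intro z hz
    rw [hagree_bv x hx z hz]
    exact MQ.bv_trans x (hKQ x hx) z (hKQ z hz) y hy

/-- transitivity, case `a ∈ P, b ∈ P, c ∈ Q` (generic). -/
theorem transPPQ (MP : MeasuredOn D R P) (MQ : MeasuredOn D R Q)
    (K : Finset R) (hKne : K.Nonempty) (hKP : ∀ z ∈ K, z ∈ P)
    (a : R) (ha : a ∈ P) (b : R) (hb : b ∈ P) (c : R) :
    (MP.bv a b ⊓ K.sup' hKne fun z => MP.bv b z ⊓ MQ.bv z c) ≤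
      K.sup' hKne fun z => MP.bv a z ⊓ MQ.bv z c := by
  rw [Finset.sup'_inf_distrib_left]
  apply Finset.sup'_le
  intro z hz
  refine le_trans ?_ (Finset.le_sup' (fun z => MP.bv a z ⊓ MQ.bv z c) hz)
  refine le_inf ?_ (inf_le_right.trans inf_le_right)
  refine le_trans ?_ (MP.bv_trans a ha b hb z (hKP z hz))
  exact inf_le_inf_left _ inf_le_left

/-- transitivity, case `a ∈ P, b ∈ Q, c ∈ Q` (generic). -/
theorem transPQQ (MP : MeasuredOn D R P) (MQ : MeasuredOn D R Q)
    (K : Finset R) (hKne : K.Nonempty) (hKQ : ∀ z ∈ K, z ∈ Q)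
    (a : R) (b : R) (hb : b ∈ Q) (c : R) (hc : c ∈ Q) :
    ((K.sup' hKne fun z => MP.bv a z ⊓ MQ.bv z b) ⊓ MQ.bv b c) ≤
      K.sup' hKne fun z => MP.bv a z ⊓ MQ.bv z c := by
  rw [Finset.sup'_inf_distrib_right]
  apply Finset.sup'_le
  intro z hz
  refine le_trans ?_ (Finset.le_sup' (fun z => MP.bv a z ⊓ MQ.bv z c) hz)
  refine le_inf (inf_le_left.trans inf_le_left) ?_
  refine le_trans ?_ (MQ.bv_trans z (hKQ z hz) b hb c hc)
  exact inf_le_inf_right _ inf_le_right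

/-- transitivity, case `a ∈ P, b ∈ Q, c ∈ P` (generic). -/
theorem transPQP (MP : MeasuredOn D R P) (MQ : MeasuredOn D R Q)
    (K : Finset R) (hKne : K.Nonempty) (hKP : ∀ z ∈ K, z ∈ P) (hKQ : ∀ z ∈ K, z ∈ Q)
    (hagree_bv : ∀ x ∈ K, ∀ y ∈ K, MP.bv x y = MQ.bv x y)
    (a : R) (ha : a ∈ P) (b : R) (hb : b ∈ Q) (c : R) (hc : c ∈ P) :
    ((K.sup' hKne fun z => MP.bv a z ⊓ MQ.bv z b) ⊓
      K.sup' hKne fun w => MQ.bv b w ⊓ MP.bv w c) ≤ MP.bv a c := by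
  rw [Finset.sup'_inf_distrib_right]
  apply Finset.sup'_le
  intro z hz
  rw [Finset.sup'_inf_distrib_left]
  apply Finset.sup'_le
  intro w hw
  have h1 : MQ.bv z b ⊓ MQ.bv b w ≤ MP.bv z w := by
    rw [hagree_bv z hz w hw]
    exact MQ.bv_trans z (hKQ z hz) b hb w (hKQ w hw)
  refine le_trans ?_ (MP.bv_trans a ha w (hKP w hw) c hc)
  refine le_inf ?_ (inf_le_right.trans inf_le_right)
  refine le_trans ?_ (MP.bv_trans a ha z (hKP z hz) w (hKP w hw))
  refine le_inf (inf_le_left.trans inf_le_left) ?_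
  refine le_trans (le_inf (inf_le_left.trans inf_le_right) (inf_le_right.trans inf_le_left)) h1

end Aux
/-- for a standard V-formation `⟨K, P, Q⟩` of `D`-measured partial lattices
(`K` a finite lattice, `K = P ∩ Q`, inclusions isometries), the defining clauses of the
Boolean values on `R = P ∪ Q` agree on overlaps, and `R` becomes a `D`-valued poset. -/
theorem amalgam_DValuedPoset {D R : Type*} [DistribLattice D] [OrderTop D]
    (P Q : Set R) (hcover : P ∪ Q = Set.univ)
    (MP : MeasuredOn D R P) (MQ : MeasuredOn D R Q)
    (K : Finset R) (hK : ↑K = P ∩ Q) (hKne : K.Nonempty)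
    -- the inclusions of `K` into `P` and `Q` are isometries
    (hagree_le : ∀ x ∈ K, ∀ y ∈ K, (MP.le x y ↔ MQ.le x y))
    (hagree_bv : ∀ x ∈ K, ∀ y ∈ K, MP.bv x y = MQ.bv x y)
    -- `K` is a lattice and a partial sublattice of both `P` and `Q`
    (hKjoin : ∀ X : Finset R, X ⊆ K → X.Nonempty →
      ∃ c ∈ K, MP.join X = some c ∧ MQ.join X = some c)
    (hKmeet : ∀ X : Finset R, X ⊆ K → X.Nonempty →
      ∃ c ∈ K, MP.meet X = some c ∧ MQ.meet X = some c) :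
    -- the clauses defining the Boolean values on `R` are mutually compatible:
    (∀ x ∈ P, ∀ y ∈ K, MP.bv x y = K.sup' hKne fun z => MP.bv x z ⊓ MQ.bv z y) ∧
    (∀ x ∈ K, ∀ y ∈ Q, MQ.bv x y = K.sup' hKne fun z => MP.bv x z ⊓ MQ.bv z y) ∧
    (∀ x ∈ Q, ∀ y ∈ K, MQ.bv x y = K.sup' hKne fun z => MQ.bv x z ⊓ MP.bv z y) ∧
    (∀ x ∈ K, ∀ y ∈ P, MP.bv x y = K.sup' hKne fun z => MQ.bv x z ⊓ MP.bv z y) ∧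
    (∀ x ∈ K, ∀ y ∈ K,
      (K.sup' hKne fun z => MP.bv x z ⊓ MQ.bv z y) =
        K.sup' hKne fun z => MQ.bv x z ⊓ MP.bv z y) ∧
    -- and `⟨R, ⟦·≤·⟧_R⟩` is a `D`-valued poset:
    (∀ a, bvAmalgam MP MQ K hKne a a = ⊤) ∧
    (∀ a b c,
      bvAmalgam MP MQ K hKne a b ⊓ bvAmalgam MP MQ K hKne b c ≤
        bvAmalgam MP MQ K hKne a c) := by
  have hKP : ∀ z ∈ K, z ∈ P := by
    intro z hz
    have h : z ∈ (↑K : Set R) := hz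
    rw [hK] at h; exact h.1
  have hKQ : ∀ z ∈ K, z ∈ Q := by
    intro z hz
    have h : z ∈ (↑K : Set R) := hz
    rw [hK] at h; exact h.2
  have hKmem : ∀ z, z ∈ P → z ∈ Q → z ∈ K := by
    intro z h1 h2
    have h : z ∈ (↑K : Set R) := by rw [hK]; exact ⟨h1, h2⟩
    exact h
  have hagree_bv' : ∀ x ∈ K, ∀ y ∈ K, MQ.bv x y = MP.bv x y := fun x hx y hy =>
    (hagree_bv x hx y hy).symm
  have c1 := claim1 MP MQ K hKne hKP hKQ hagree_bv
  have c2 := claim2 MP MQ K hKne hKP hKQ hagree_bv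
  have c3 := claim1 MQ MP K hKne hKQ hKP hagree_bv'
  have c4 := claim2 MQ MP K hKne hKQ hKP hagree_bv'
  have c5 : ∀ x ∈ K, ∀ y ∈ K,
      (K.sup' hKne fun z => MP.bv x z ⊓ MQ.bv z y) =
        K.sup' hKne fun z => MQ.bv x z ⊓ MP.bv z y := by
    intro x hx y hy
    rw [← c1 x (hKP x hx) y hy, ← c3 x (hKQ x hx) y hy, hagree_bv x hx y hy]
  -- characterizations of `bvAmalgam`
  have hA_PP : ∀ x ∈ P, ∀ y ∈ P, bvAmalgam MP MQ K hKne x y = MP.bv x y := by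
    intro x hx y hy
    simp only [bvAmalgam, if_pos (⟨hx, hy⟩ : x ∈ P ∧ y ∈ P)]
  have hA_QQ : ∀ x ∈ Q, ∀ y ∈ Q, bvAmalgam MP MQ K hKne x y = MQ.bv x y := by
    intro x hx y hy
    by_cases h1 : x ∈ P ∧ y ∈ P
    · simp only [bvAmalgam, if_pos h1]
      exact hagree_bv x (hKmem x h1.1 hx) y (hKmem y h1.2 hy)
    · simp only [bvAmalgam, if_neg h1, if_pos (⟨hx, hy⟩ : x ∈ Q ∧ y ∈ Q)]
  have hA_PQ : ∀ x ∈ P, ∀ y ∈ Q, bvAmalgam MP MQ K hKne x y =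
      K.sup' hKne fun z => MP.bv x z ⊓ MQ.bv z y := by
    intro x hx y hy
    by_cases h1 : x ∈ P ∧ y ∈ P
    · simp only [bvAmalgam, if_pos h1]
      exact c1 x hx y (hKmem y h1.2 hy)
    · by_cases h2 : x ∈ Q ∧ y ∈ Q
      · simp only [bvAmalgam, if_neg h1, if_pos h2]
        exact c2 x (hKmem x hx h2.1) y hy
      · simp only [bvAmalgam, if_neg h1, if_neg h2,
          if_pos (⟨hx, hy⟩ : x ∈ P ∧ y ∈ Q)]
  have hA_QP : ∀ x ∈ Q, ∀ y ∈ P, bvAmalgam MP MQ K hKne x y =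
      K.sup' hKne fun z => MQ.bv x z ⊓ MP.bv z y := by
    intro x hx y hy
    by_cases h1 : x ∈ P ∧ y ∈ P
    · simp only [bvAmalgam, if_pos h1]
      exact c4 x (hKmem x h1.1 hx) y hy
    · by_cases h2 : x ∈ Q ∧ y ∈ Q
      · simp only [bvAmalgam, if_neg h1, if_pos h2]
        exact c3 x hx y (hKmem y hy h2.2)
      · by_cases h3 : x ∈ P ∧ y ∈ Q
        · simp only [bvAmalgam, if_neg h1, if_neg h2, if_pos h3]
          exact c5 x (hKmem x h3.1 hx) y (hKmem y hy h3.2)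
        · simp only [bvAmalgam, if_neg h1, if_neg h2, if_neg h3]
  have hmem : ∀ a : R, a ∈ P ∨ a ∈ Q := by
    intro a
    have : a ∈ P ∪ Q := by rw [hcover]; exact Set.mem_univ a
    exact this
  refine ⟨c1, c2, c3, c4, c5, ?_, ?_⟩
  · intro a
    rcases hmem a with ha | ha
    · rw [hA_PP a ha a ha]; exact MP.bv_refl a ha
    · rw [hA_QQ a ha a ha]; exact MQ.bv_refl a ha
  · intro a b c
    rcases hmem a with ha | ha <;> rcases hmem b with hb | hb <;>
      rcases hmem c with hc | hc
    · rw [hA_PP a ha b hb, hA_PP b hb c hc, hA_PP a ha c hc]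
      exact MP.bv_trans a ha b hb c hc
    · rw [hA_PP a ha b hb, hA_PQ b hb c hc, hA_PQ a ha c hc]
      exact transPPQ MP MQ K hKne hKP a ha b hb c
    · rw [hA_PQ a ha b hb, hA_QP b hb c hc, hA_PP a ha c hc]
      exact transPQP MP MQ K hKne hKP hKQ hagree_bv a ha b hb c hc
    · rw [hA_PQ a ha b hb, hA_QQ b hb c hc, hA_PQ a ha c hc]
      exact transPQQ MP MQ K hKne hKQ a b hb c hc
    · rw [hA_QP a ha b hb, hA_PP b hb c hc, hA_QP a ha c hc]
      exact transPQQ MQ MP K hKne hKP a b hb c hc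
    · rw [hA_QP a ha b hb, hA_PQ b hb c hc, hA_QQ a ha c hc]
      exact transPQP MQ MP K hKne hKQ hKP hagree_bv' a ha b hb c hc
    · rw [hA_QQ a ha b hb, hA_QP b hb c hc, hA_QP a ha c hc]
      exact transPPQ MQ MP K hKne hKQ a ha b hb c
    · rw [hA_QQ a ha b hb, hA_QQ b hb c hc, hA_QQ a ha c hc]
      exact MQ.bv_trans a ha b hb c hc
end

section
/- In the amalgam R = P ⨿_K Q of a standard V-formation of D-measured partial lattices (K a finite lattice), for all x ∈ P and y ∈ Q (or vice versa), the equality ⟦x=y⟧ = ⋁_{z∈K}(⟦x=z⟧ ∧ ⟦z=y⟧) holds; consequently, for any a ∈ P and any nonempty finite Y ⊆ Q, ⟦a∈Y⟧ ≤ ⟦a∈K⟧. -/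
open Finset

open scoped Classical

/-- The Boolean value `⟦x = y⟧` on the amalgam. -/
noncomputable def eqvAmalgam {D R : Type*} [DistribLattice D] [OrderTop D]
    {P Q : Set R} (MP : MeasuredOn D R P) (MQ : MeasuredOn D R Q)
    (K : Finset R) (hKne : K.Nonempty) (x y : R) : D :=
  bvAmalgam MP MQ K hKne x y ⊓ bvAmalgam MP MQ K hKne y x

section Aux
variable {D R : Type*} [DistribLattice D] [OrderTop D]
    {P Q : Set R} (MP : MeasuredOn D R P) (MQ : MeasuredOn D R Q)
    {K : Finset R} (hKne : K.Nonempty)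

lemma bvA_PP {x y : R} (hx : x ∈ P) (hy : y ∈ P) :
    bvAmalgam MP MQ K hKne x y = MP.bv x y := if_pos ⟨hx, hy⟩

lemma bvA_QQ {x y : R} (h : ¬(x ∈ P ∧ y ∈ P)) (hx : x ∈ Q) (hy : y ∈ Q) :
    bvAmalgam MP MQ K hKne x y = MQ.bv x y := by
  unfold bvAmalgam; rw [if_neg h, if_pos ⟨hx, hy⟩]

lemma bvA_PQ {x y : R} (hx : x ∈ P) (hy : y ∈ Q) (hx' : x ∉ Q) (hy' : y ∉ P) :
    bvAmalgam MP MQ K hKne x y = K.sup' hKne fun z => MP.bv x z ⊓ MQ.bv z y := by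
  unfold bvAmalgam
  rw [if_neg (fun h => hy' h.2), if_neg (fun h => hx' h.1), if_pos ⟨hx, hy⟩]

lemma bvA_QP {x y : R} (hx : x ∈ Q) (hy : y ∈ P) (hx' : x ∉ P) (hy' : y ∉ Q) :
    bvAmalgam MP MQ K hKne x y = K.sup' hKne fun z => MQ.bv x z ⊓ MP.bv z y := by
  unfold bvAmalgam
  rw [if_neg (fun h => hx' h.1), if_neg (fun h => hy' h.2), if_neg (fun h => hx' h.1)]

lemma bv_trans_thruK (hK : ↑K = P ∩ Q)
    (hagree_bv : ∀ x ∈ K, ∀ y ∈ K, MP.bv x y = MQ.bv x y)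
    {x y z : R} (hx : x ∈ P ∪ Q) (hy : y ∈ P ∪ Q) (hz : z ∈ K) :
    bvAmalgam MP MQ K hKne x z ⊓ bvAmalgam MP MQ K hKne z y ≤
      bvAmalgam MP MQ K hKne x y := by
  have hzPQ : z ∈ P ∩ Q := hK ▸ hz
  obtain ⟨hzP, hzQ⟩ := hzPQ
  have hmemK : ∀ w : R, w ∈ P → w ∈ Q → w ∈ K := fun w hp hq => by
    have : w ∈ (↑K : Set R) := hK ▸ Set.mem_inter hp hq
    exact this
  by_cases hxP : x ∈ P
  · by_cases hyP : y ∈ P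
    · rw [bvA_PP MP MQ hKne hxP hzP, bvA_PP MP MQ hKne hzP hyP,
        bvA_PP MP MQ hKne hxP hyP]
      exact MP.bv_trans x hxP z hzP y hyP
    · have hyQ : y ∈ Q := hy.resolve_left hyP
      rw [bvA_PP MP MQ hKne hxP hzP,
        bvA_QQ MP MQ hKne (fun h => hyP h.2) hzQ hyQ]
      by_cases hxQ : x ∈ Q
      · rw [bvA_QQ MP MQ hKne (fun h => hyP h.2) hxQ hyQ,
          hagree_bv x (hmemK x hxP hxQ) z hz]
        exact MQ.bv_trans x hxQ z hzQ y hyQ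
      · rw [bvA_PQ MP MQ hKne hxP hyQ hxQ hyP]
        exact Finset.le_sup' (fun w => MP.bv x w ⊓ MQ.bv w y) hz
  · have hxQ : x ∈ Q := hx.resolve_left hxP
    rw [bvA_QQ MP MQ hKne (fun h => hxP h.1) hxQ hzQ]
    by_cases hyP : y ∈ P
    · rw [bvA_PP MP MQ hKne hzP hyP]
      by_cases hyQ : y ∈ Q
      · rw [bvA_QQ MP MQ hKne (fun h => hxP h.1) hxQ hyQ,
          hagree_bv z hz y (hmemK y hyP hyQ)]
        exact MQ.bv_trans x hxQ z hzQ y hyQ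
      · rw [bvA_QP MP MQ hKne hxQ hyP hxP hyQ]
        exact Finset.le_sup' (fun w => MQ.bv x w ⊓ MP.bv w y) hz
    · have hyQ : y ∈ Q := hy.resolve_left hyP
      rw [bvA_QQ MP MQ hKne (fun h => hyP h.2) hzQ hyQ,
        bvA_QQ MP MQ hKne (fun h => hxP h.1) hxQ hyQ]
      exact MQ.bv_trans x hxQ z hzQ y hyQ

lemma eqv_trans_thruK (hK : ↑K = P ∩ Q)
    (hagree_bv : ∀ x ∈ K, ∀ y ∈ K, MP.bv x y = MQ.bv x y)
    {x y z : R} (hx : x ∈ P ∪ Q) (hy : y ∈ P ∪ Q) (hz : z ∈ K) :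
    eqvAmalgam MP MQ K hKne x z ⊓ eqvAmalgam MP MQ K hKne z y ≤
      eqvAmalgam MP MQ K hKne x y := by
  have hzPQ : z ∈ P ∩ Q := hK ▸ hz
  unfold eqvAmalgam
  refine le_inf (le_trans ?_ (bv_trans_thruK MP MQ hKne hK hagree_bv hx hy hz))
    (le_trans ?_ (bv_trans_thruK MP MQ hKne hK hagree_bv hy hx hz))
  · exact le_inf (inf_le_left.trans inf_le_left) (inf_le_right.trans inf_le_left)
  · exact le_inf (inf_le_right.trans inf_le_right) (inf_le_left.trans inf_le_right)

lemma eqv_refl {x : R} (hx : x ∈ P ∪ Q) : eqvAmalgam MP MQ K hKne x x = ⊤ := by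
  unfold eqvAmalgam
  rcases hx with hx | hx
  · rw [bvA_PP MP MQ hKne hx hx, MP.bv_refl x hx, inf_idem]
  · by_cases hxP : x ∈ P
    · rw [bvA_PP MP MQ hKne hxP hxP, MP.bv_refl x hxP, inf_idem]
    · rw [bvA_QQ MP MQ hKne (fun h => hxP h.1) hx hx, MQ.bv_refl x hx, inf_idem]

end Aux

/-- in the amalgam `R = P ⨿_K Q` of a standard V-formation of `D`-measured
partial lattices, for `x ∈ P` and `y ∈ Q` (or vice versa),
`⟦x=y⟧ = ⋁_{z∈K}(⟦x=z⟧ ⊓ ⟦z=y⟧)`; consequently, for `a ∈ P` and a nonempty finite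
`Y ⊆ Q`, `⟦a∈Y⟧ ≤ ⟦a∈K⟧`. -/
theorem amalgam_eqv_through_K {D R : Type*} [DistribLattice D] [OrderTop D]
    (P Q : Set R) (hcover : P ∪ Q = Set.univ)
    (MP : MeasuredOn D R P) (MQ : MeasuredOn D R Q)
    (K : Finset R) (hK : ↑K = P ∩ Q) (hKne : K.Nonempty)
    (hagree_le : ∀ x ∈ K, ∀ y ∈ K, (MP.le x y ↔ MQ.le x y))
    (hagree_bv : ∀ x ∈ K, ∀ y ∈ K, MP.bv x y = MQ.bv x y)
    (hKjoin : ∀ X : Finset R, X ⊆ K → X.Nonempty →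
      ∃ c ∈ K, MP.join X = some c ∧ MQ.join X = some c)
    (hKmeet : ∀ X : Finset R, X ⊆ K → X.Nonempty →
      ∃ c ∈ K, MP.meet X = some c ∧ MQ.meet X = some c) :
    (∀ x ∈ P, ∀ y ∈ Q,
      eqvAmalgam MP MQ K hKne x y =
        K.sup' hKne fun z => eqvAmalgam MP MQ K hKne x z ⊓ eqvAmalgam MP MQ K hKne z y) ∧
    (∀ x ∈ Q, ∀ y ∈ P,
      eqvAmalgam MP MQ K hKne x y =
        K.sup' hKne fun z => eqvAmalgam MP MQ K hKne x z ⊓ eqvAmalgam MP MQ K hKne z y) ∧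
    (∀ a ∈ P, ∀ (Y : Finset R) (hY : Y.Nonempty), ↑Y ⊆ Q →
      Y.sup' hY (fun y => eqvAmalgam MP MQ K hKne a y) ≤
        K.sup' hKne fun z => eqvAmalgam MP MQ K hKne a z) := by
  
  classical
  set E := eqvAmalgam MP MQ K hKne with hE
  have hmemK : ∀ w : R, w ∈ P → w ∈ Q → w ∈ K := fun w hp hq => by
    have : w ∈ (↑K : Set R) := hK ▸ Set.mem_inter hp hq
    exact this
  have hKP : ∀ z ∈ K, z ∈ P := fun z hz => (show z ∈ P ∩ Q from hK ▸ hz).1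
  have hKQ : ∀ z ∈ K, z ∈ Q := fun z hz => (show z ∈ P ∩ Q from hK ▸ hz).2
  have hge : ∀ x ∈ P ∪ Q, ∀ y ∈ P ∪ Q,
      (K.sup' hKne fun z => E x z ⊓ E z y) ≤ E x y := fun x hx y hy =>
    Finset.sup'_le _ _ fun z hz =>
      eqv_trans_thruK MP MQ hKne hK hagree_bv hx hy hz
  have hle1 : ∀ x ∈ P, ∀ y ∈ Q, E x y ≤ K.sup' hKne fun z => E x z ⊓ E z y := by
    intro x hx y hy
    by_cases hxQ : x ∈ Q
    · have hxK := hmemK x hx hxQ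
      calc E x y = E x x ⊓ E x y := by
              rw [hE, eqv_refl MP MQ hKne (Or.inl hx), top_inf_eq]
        _ ≤ _ := Finset.le_sup' (fun z => E x z ⊓ E z y) hxK
    by_cases hyP : y ∈ P
    · have hyK := hmemK y hyP hy
      calc E x y = E x y ⊓ E y y := by
              rw [hE, eqv_refl MP MQ hKne (Or.inr hy), inf_top_eq]
        _ ≤ _ := Finset.le_sup' (fun z => E x z ⊓ E z y) hyK
    rw [hE]
    unfold eqvAmalgam
    rw [bvA_PQ MP MQ hKne hx hy hxQ hyP, bvA_QP MP MQ hKne hy hx hyP hxQ,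
      Finset.sup'_inf_sup']
    refine Finset.sup'_le _ _ ?_
    rintro ⟨z, w⟩ hzw
    rw [Finset.mem_product] at hzw
    obtain ⟨hz, hw⟩ := hzw
    dsimp only at hz hw ⊢
    have hzP := hKP z hz; have hzQ := hKQ z hz
    have hwP := hKP w hw; have hwQ := hKQ w hw
    refine le_trans ?_
      (Finset.le_sup' (fun u => eqvAmalgam MP MQ K hKne x u ⊓ eqvAmalgam MP MQ K hKne u y) hz)
    unfold eqvAmalgam
    rw [bvA_PP MP MQ hKne hx hzP, bvA_PP MP MQ hKne hzP hx,
      bvA_QQ MP MQ hKne (fun h => hyP h.2) hzQ hy,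
      bvA_QQ MP MQ hKne (fun h => hyP h.1) hy hzQ]
    have ha : (MP.bv x z ⊓ MQ.bv z y) ⊓ (MQ.bv y w ⊓ MP.bv w x) ≤ MP.bv x z :=
      inf_le_left.trans inf_le_left
    have hb : (MP.bv x z ⊓ MQ.bv z y) ⊓ (MQ.bv y w ⊓ MP.bv w x) ≤ MQ.bv z y :=
      inf_le_left.trans inf_le_right
    have hc : (MP.bv x z ⊓ MQ.bv z y) ⊓ (MQ.bv y w ⊓ MP.bv w x) ≤ MQ.bv y w :=
      inf_le_right.trans inf_le_left
    have hd : (MP.bv x z ⊓ MQ.bv z y) ⊓ (MQ.bv y w ⊓ MP.bv w x) ≤ MP.bv w x :=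
      inf_le_right.trans inf_le_right
    have hzw1 : (MP.bv x z ⊓ MQ.bv z y) ⊓ (MQ.bv y w ⊓ MP.bv w x) ≤ MP.bv z w := by
      rw [hagree_bv z hz w hw]
      exact (le_inf hb hc).trans (MQ.bv_trans z hzQ y hy w hwQ)
    have hzx : (MP.bv x z ⊓ MQ.bv z y) ⊓ (MQ.bv y w ⊓ MP.bv w x) ≤ MP.bv z x :=
      (le_inf hzw1 hd).trans (MP.bv_trans z hzP w hwP x hx)
    have hwz : (MP.bv x z ⊓ MQ.bv z y) ⊓ (MQ.bv y w ⊓ MP.bv w x) ≤ MQ.bv w z := by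
      rw [← hagree_bv w hw z hz]
      exact (le_inf hd ha).trans (MP.bv_trans w hwP x hx z hzP)
    have hyz : (MP.bv x z ⊓ MQ.bv z y) ⊓ (MQ.bv y w ⊓ MP.bv w x) ≤ MQ.bv y z :=
      (le_inf hc hwz).trans (MQ.bv_trans y hy w hwQ z hzQ)
    exact le_inf (le_inf ha hzx) (le_inf hb hyz)
  have hle2 : ∀ x ∈ Q, ∀ y ∈ P, E x y ≤ K.sup' hKne fun z => E x z ⊓ E z y := by
    intro x hx y hy
    by_cases hxP : x ∈ P
    · have hxK := hmemK x hxP hx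
      calc E x y = E x x ⊓ E x y := by
              rw [hE, eqv_refl MP MQ hKne (Or.inr hx), top_inf_eq]
        _ ≤ _ := Finset.le_sup' (fun z => E x z ⊓ E z y) hxK
    by_cases hyQ : y ∈ Q
    · have hyK := hmemK y hy hyQ
      calc E x y = E x y ⊓ E y y := by
              rw [hE, eqv_refl MP MQ hKne (Or.inl hy), inf_top_eq]
        _ ≤ _ := Finset.le_sup' (fun z => E x z ⊓ E z y) hyK
    rw [hE]
    unfold eqvAmalgam
    rw [bvA_QP MP MQ hKne hx hy hxP hyQ, bvA_PQ MP MQ hKne hy hx hyQ hxP,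
      Finset.sup'_inf_sup']
    refine Finset.sup'_le _ _ ?_
    rintro ⟨z, w⟩ hzw
    rw [Finset.mem_product] at hzw
    obtain ⟨hz, hw⟩ := hzw
    dsimp only at hz hw ⊢
    have hzP := hKP z hz; have hzQ := hKQ z hz
    have hwP := hKP w hw; have hwQ := hKQ w hw
    refine le_trans ?_
      (Finset.le_sup' (fun u => eqvAmalgam MP MQ K hKne x u ⊓ eqvAmalgam MP MQ K hKne u y) hz)
    unfold eqvAmalgam
    rw [bvA_QQ MP MQ hKne (fun h => hxP h.1) hx hzQ,
      bvA_QQ MP MQ hKne (fun h => hxP h.2) hzQ hx,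
      bvA_PP MP MQ hKne hzP hy, bvA_PP MP MQ hKne hy hzP]
    have ha : (MQ.bv x z ⊓ MP.bv z y) ⊓ (MP.bv y w ⊓ MQ.bv w x) ≤ MQ.bv x z :=
      inf_le_left.trans inf_le_left
    have hb : (MQ.bv x z ⊓ MP.bv z y) ⊓ (MP.bv y w ⊓ MQ.bv w x) ≤ MP.bv z y :=
      inf_le_left.trans inf_le_right
    have hc : (MQ.bv x z ⊓ MP.bv z y) ⊓ (MP.bv y w ⊓ MQ.bv w x) ≤ MP.bv y w :=
      inf_le_right.trans inf_le_left
    have hd : (MQ.bv x z ⊓ MP.bv z y) ⊓ (MP.bv y w ⊓ MQ.bv w x) ≤ MQ.bv w x :=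
      inf_le_right.trans inf_le_right
    have hzw1 : (MQ.bv x z ⊓ MP.bv z y) ⊓ (MP.bv y w ⊓ MQ.bv w x) ≤ MQ.bv z w := by
      rw [← hagree_bv z hz w hw]
      exact (le_inf hb hc).trans (MP.bv_trans z hzP y hy w hwP)
    have hzx : (MQ.bv x z ⊓ MP.bv z y) ⊓ (MP.bv y w ⊓ MQ.bv w x) ≤ MQ.bv z x :=
      (le_inf hzw1 hd).trans (MQ.bv_trans z hzQ w hwQ x hx)
    have hwz : (MQ.bv x z ⊓ MP.bv z y) ⊓ (MP.bv y w ⊓ MQ.bv w x) ≤ MP.bv w z := by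
      rw [hagree_bv w hw z hz]
      exact (le_inf hd ha).trans (MQ.bv_trans w hwQ x hx z hzQ)
    have hyz : (MQ.bv x z ⊓ MP.bv z y) ⊓ (MP.bv y w ⊓ MQ.bv w x) ≤ MP.bv y z :=
      (le_inf hc hwz).trans (MP.bv_trans y hy w hwP z hzP)
    exact le_inf (le_inf ha hzx) (le_inf hb hyz)
  have heq1 : ∀ x ∈ P, ∀ y ∈ Q,
      E x y = K.sup' hKne fun z => E x z ⊓ E z y := fun x hx y hy =>
    le_antisymm (hle1 x hx y hy) (hge x (Or.inl hx) y (Or.inr hy))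
  refine ⟨heq1, fun x hx y hy =>
    le_antisymm (hle2 x hx y hy) (hge x (Or.inr hx) y (Or.inl hy)), ?_⟩
  intro a ha Y hY hYQ
  refine Finset.sup'_le _ _ fun y hyY => ?_
  rw [heq1 a ha y (hYQ hyY)]
  exact Finset.sup'_le _ _ fun z hz =>
    inf_le_left.trans (Finset.le_sup' (fun u => E a u) hz)
end

section
/- Let D be a distributive lattice with zero, let P be a partial lattice, and let ⟦·≤·⟧ : P × P → D be a map. Then ⟨P, ⟦·≤·⟧⟩ is a D^op-measured partial lattice (i.e., satisfies, with meets and joins of D interchanged: ⟦a≤a⟧ = 0; ⟦a≤c⟧ ≤ ⟦a≤b⟧ ∨ ⟦b≤c⟧; x ≤ y implies ⟦x≤y⟧ = 0; a = ⋁X implies ⟦a≤b⟧ = ⋁_{x∈X}⟦x≤b⟧; a = ⋀X implies ⟦b≤a⟧ = ⋁_{x∈X}⟦b≤x⟧) if and only if there exists a (∨,0)-homomorphism φ : Con_c P → D with ⟦x≤y⟧ = φ(Θ⁺_P(x,y)) for all x, y ∈ P, where Θ⁺_P(x,y) denotes the least congruence θ of P with x ≤_θ y. -/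
open Finset

/-- A partial lattice: a set with a partial order `le` and partial join and meet
operations (modelled as `Option`-valued functions on finite sets) such that any defined
join is a supremum and any defined meet is an infimum with respect to `le`. -/
structure PartialLattice (P : Type*) where
  le : P → P → Prop
  le_refl : ∀ a, le a a
  le_trans : ∀ a b c, le a b → le b c → le a c
  le_antisymm : ∀ a b, le a b → le b a → a = b
  join : Finset P → Option P
  meet : Finset P → Option P
  join_spec : ∀ (X : Finset P) (a : P), join X = some a →
    X.Nonempty ∧ (∀ x ∈ X, le x a) ∧ ∀ b, (∀ x ∈ X, le x b) → le a b
  meet_spec : ∀ (X : Finset P) (a : P), meet X = some a →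
    X.Nonempty ∧ (∀ x ∈ X, le a x) ∧ ∀ b, (∀ x ∈ X, le b x) → le b a

/-- A congruence of a partial lattice: a preordering containing `le` for which every
defined join is still a supremum and every defined meet is still an infimum. -/
def IsCongruence {P : Type*} (L : PartialLattice P) (r : Set (P × P)) : Prop :=
  (∀ a b, L.le a b → (a, b) ∈ r) ∧
  (∀ a, (a, a) ∈ r) ∧
  (∀ a b c, (a, b) ∈ r → (b, c) ∈ r → (a, c) ∈ r) ∧
  (∀ (X : Finset P) (a : P), L.join X = some a →
    (∀ x ∈ X, (x, a) ∈ r) ∧ ∀ b, (∀ x ∈ X, (x, b) ∈ r) → (a, b) ∈ r) ∧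
  (∀ (X : Finset P) (a : P), L.meet X = some a →
    (∀ x ∈ X, (a, x) ∈ r) ∧ ∀ b, (∀ x ∈ X, (b, x) ∈ r) → (b, a) ∈ r)

/-- The congruence of a partial lattice generated by a set of pairs.  The compact
congruences are exactly those generated by finite sets of pairs, and
`Θ⁺(x,y) = congGen L {(x,y)}`. -/
def congGen {P : Type*} (L : PartialLattice P) (S : Set (P × P)) : Set (P × P) :=
  ⋂₀ {r | IsCongruence L r ∧ S ⊆ r}

/-!
The pivot is the condition that `⟦a ≤ b⟧ ≤ ⋁ᵢ ⟦aᵢ ≤ bᵢ⟧` whenever `(a, b)` lies in the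
congruence generated by the pairs `(aᵢ, bᵢ)`. A `Dᵒᵖ`-measure satisfies it, because
`{(x, y) | ⟦x ≤ y⟧ ≤ c}` is a congruence for every `c : D`; conversely the measure axioms
are instances of it. It also says exactly that `⨆ᵢ Θ⁺(aᵢ, bᵢ) ↦ ⋁ᵢ ⟦aᵢ ≤ bᵢ⟧` is a
well-defined monotone map on compact congruences, i.e. a `(∨, 0)`-homomorphism.
-/

section

variable {P D : Type*} {L : PartialLattice P}

namespace IsCongruence

variable {r : Set (P × P)} (hr : IsCongruence L r)
include hr

lemma mem_of_le {a b : P} (hab : L.le a b) : (a, b) ∈ r := hr.1 a b hab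

lemma mem_trans {a b c : P} (hab : (a, b) ∈ r) (hbc : (b, c) ∈ r) : (a, c) ∈ r :=
  hr.2.2.1 a b c hab hbc

lemma join_mem {X : Finset P} {a b : P} (ha : L.join X = some a) (hX : ∀ x ∈ X, (x, b) ∈ r) :
    (a, b) ∈ r :=
  (hr.2.2.2.1 X a ha).2 b hX

lemma meet_mem {X : Finset P} {a b : P} (ha : L.meet X = some a) (hX : ∀ x ∈ X, (b, x) ∈ r) :
    (b, a) ∈ r :=
  (hr.2.2.2.2 X a ha).2 b hX

end IsCongruence

lemma isCongruence_congGen (S : Set (P × P)) : IsCongruence L (congGen L S) := by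
  refine ⟨fun a b hab r hr => hr.1.mem_of_le hab, fun a r hr => hr.1.2.1 a,
    fun a b c hab hbc r hr => hr.1.mem_trans (hab r hr) (hbc r hr), fun X a ha => ⟨?_, ?_⟩,
    fun X a ha => ⟨?_, ?_⟩⟩
  · exact fun x hx r hr => (hr.1.2.2.2.1 X a ha).1 x hx
  · exact fun b hb r hr => hr.1.join_mem ha fun x hx => hb x hx r hr
  · exact fun x hx r hr => (hr.1.2.2.2.2 X a ha).1 x hx
  · exact fun b hb r hr => hr.1.meet_mem ha fun x hx => hb x hx r hr

lemma subset_congGen (S : Set (P × P)) : S ⊆ congGen L S :=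
  fun _ hp _ hr => hr.2 hp

lemma congGen_subset {S r : Set (P × P)} (hr : IsCongruence L r) (hSr : S ⊆ r) :
    congGen L S ⊆ r :=
  Set.sInter_subset_of_mem ⟨hr, hSr⟩

lemma congGen_subset_congGen_iff {S T : Set (P × P)} :
    congGen L S ⊆ congGen L T ↔ S ⊆ congGen L T :=
  ⟨(subset_congGen S).trans, congGen_subset (isCongruence_congGen T)⟩

variable [SemilatticeSup D] [OrderBot D] (L) (bv : P → P → D)

def RespectsCongGen : Prop :=
  ∀ (T : Finset (P × P)) (p : P × P), p ∈ congGen L T → bv p.1 p.2 ≤ T.sup (Function.uncurry bv)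

variable {L bv}

section Measured

variable (htrans : ∀ a b c, bv a c ≤ bv a b ⊔ bv b c)
    (hle : ∀ x y, L.le x y → bv x y = ⊥)
    (hjoin : ∀ (X : Finset P) (a : P), L.join X = some a → ∀ (hX : X.Nonempty) (b : P),
      bv a b = X.sup' hX fun x => bv x b)
    (hmeet : ∀ (X : Finset P) (a : P), L.meet X = some a → ∀ (hX : X.Nonempty) (b : P),
      bv b a = X.sup' hX fun x => bv b x)
include htrans hle hjoin hmeet

lemma isCongruence_setOf_le (c : D) : IsCongruence L {p | bv p.1 p.2 ≤ c} := by
  have mem_of_le {x y : P} (hxy : L.le x y) : bv x y ≤ c := (hle x y hxy).trans_le bot_le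
  refine ⟨fun a b => mem_of_le, fun a => mem_of_le (L.le_refl a),
    fun a b c' hab hbc => (htrans a b c').trans (sup_le hab hbc), fun X a ha => ⟨?_, ?_⟩,
    fun X a ha => ⟨?_, ?_⟩⟩
  · exact fun x hx => mem_of_le ((L.join_spec X a ha).2.1 x hx)
  · obtain ⟨hX, -⟩ := L.join_spec X a ha
    exact fun b hb => (hjoin X a ha hX b).trans_le (sup'_le hX _ hb)
  · exact fun x hx => mem_of_le ((L.meet_spec X a ha).2.1 x hx)
  · obtain ⟨hX, -⟩ := L.meet_spec X a ha
    exact fun b hb => (hmeet X a ha hX b).trans_le (sup'_le hX _ hb)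

lemma respectsCongGen_of_measured : RespectsCongGen L bv := fun _ _ hp =>
  congGen_subset (isCongruence_setOf_le htrans hle hjoin hmeet _)
    (fun _ hq => le_sup (f := Function.uncurry bv) hq) hp

end Measured

namespace RespectsCongGen

variable (h : RespectsCongGen L bv)
include h

lemma sup_le_sup {S T : Finset (P × P)} (hST : congGen L S ⊆ congGen L T) :
    S.sup (Function.uncurry bv) ≤ T.sup (Function.uncurry bv) :=
  Finset.sup_le fun p hp => h T p (hST (subset_congGen _ hp))

lemma exists_hom : ∃ φ : Set (P × P) → D,
    φ (congGen L ∅) = ⊥ ∧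
    (∀ S T : Finset (P × P),
      φ (congGen L (↑S ∪ ↑T)) = φ (congGen L ↑S) ⊔ φ (congGen L ↑T)) ∧
    (∀ x y, bv x y = φ (congGen L {(x, y)})) := by
  classical
  have hfactor : (fun S : Finset (P × P) => S.sup (Function.uncurry bv)).FactorsThrough
      (fun S => congGen L S) := fun S T hST =>
    (h.sup_le_sup hST.le).antisymm (h.sup_le_sup hST.ge)
  set φ := Function.extend (fun S : Finset (P × P) => congGen L S)
    (fun S => S.sup (Function.uncurry bv)) ⊥
  have hφ (S : Finset (P × P)) : φ (congGen L S) = S.sup (Function.uncurry bv) :=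
    hfactor.extend_apply _ S
  refine ⟨φ, ?_, fun S T => ?_, fun x y => ?_⟩
  · simpa using hφ ∅
  · rw [← coe_union, hφ, hφ, hφ, sup_union]
  · simpa using (hφ {(x, y)}).symm

lemma bv_self (a : P) : bv a a = ⊥ :=
  le_bot_iff.mp (h ∅ (a, a) ((isCongruence_congGen _).2.1 a))

lemma bv_trans (a b c : P) : bv a c ≤ bv a b ⊔ bv b c := by
  classical
  have hgen := subset_congGen (L := L) ↑({(a, b), (b, c)} : Finset (P × P))
  simpa using h {(a, b), (b, c)} (a, c)
    ((isCongruence_congGen _).mem_trans (b := b) (hgen (by simp)) (hgen (by simp)))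

lemma bv_eq_bot_of_le {x y : P} (hxy : L.le x y) : bv x y = ⊥ :=
  le_bot_iff.mp (h ∅ (x, y) ((isCongruence_congGen _).mem_of_le hxy))

lemma bv_join {X : Finset P} {a : P} (ha : L.join X = some a) (hX : X.Nonempty) (b : P) :
    bv a b = X.sup' hX fun x => bv x b := by
  classical
  refine le_antisymm ?_ (sup'_le hX _ fun x hx => ?_)
  · have hab : (a, b) ∈ congGen L ↑(X.image (·, b)) :=
      (isCongruence_congGen _).join_mem ha fun x hx => subset_congGen _ (by simp [hx])
    simpa [sup'_eq_sup, sup_image, Function.comp_def] using h _ _ hab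
  · have hxb : (x, b) ∈ congGen L ↑({(a, b)} : Finset (P × P)) :=
      (isCongruence_congGen _).mem_trans
        ((isCongruence_congGen _).mem_of_le ((L.join_spec X a ha).2.1 x hx))
        (subset_congGen _ (by simp))
    simpa using h _ _ hxb

lemma bv_meet {X : Finset P} {a : P} (ha : L.meet X = some a) (hX : X.Nonempty) (b : P) :
    bv b a = X.sup' hX fun x => bv b x := by
  classical
  refine le_antisymm ?_ (sup'_le hX _ fun x hx => ?_)
  · have hba : (b, a) ∈ congGen L ↑(X.image (b, ·)) :=
      (isCongruence_congGen _).meet_mem ha fun x hx => subset_congGen _ (by simp [hx])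
    simpa [sup'_eq_sup, sup_image, Function.comp_def] using h _ _ hba
  · have hbx : (b, x) ∈ congGen L ↑({(b, a)} : Finset (P × P)) :=
      (isCongruence_congGen _).mem_trans (subset_congGen _ (by simp))
        ((isCongruence_congGen _).mem_of_le ((L.meet_spec X a ha).2.1 x hx))
    simpa using h _ _ hbx

end RespectsCongGen

lemma respectsCongGen_of_hom {φ : Set (P × P) → D} (hbot : φ (congGen L ∅) = ⊥)
    (hsup : ∀ S T : Finset (P × P),
      φ (congGen L (↑S ∪ ↑T)) = φ (congGen L ↑S) ⊔ φ (congGen L ↑T))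
    (hsingle : ∀ x y, bv x y = φ (congGen L {(x, y)})) :
    RespectsCongGen L bv := by
  classical
  have hφ (S : Finset (P × P)) : φ (congGen L S) = S.sup (Function.uncurry bv) := by
    induction S using Finset.induction_on with
    | empty => simpa using hbot
    | insert p S _ ih =>
      rw [insert_eq, coe_union, hsup, ih, sup_union, sup_singleton, coe_singleton, ← hsingle]
      rfl
  intro T p hp
  have hunion : congGen L (↑({p} : Finset (P × P)) ∪ ↑T) = congGen L ↑T :=
    (congGen_subset_congGen_iff.mpr
      (by simpa [Set.insert_subset_iff] using ⟨hp, subset_congGen _⟩)).antisymm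
    (congGen_subset_congGen_iff.mpr (Set.subset_union_right.trans (subset_congGen _)))
  have hsup_eq := congrArg φ hunion
  rw [hsup, hφ, hφ] at hsup_eq
  rw [← hsup_eq]
  exact le_sup_of_le_left (le_sup (f := Function.uncurry bv) (mem_singleton_self p))

end

/-- for a distributive lattice `D` with zero, a partial lattice `P` and a map
`⟦·≤·⟧ : P × P → D`, the pair `⟨P, ⟦·≤·⟧⟩` is a `Dᵒᵖ`-measured partial lattice (axioms
with meets and joins of `D` interchanged) if and only if there is a `(∨,0)`-homomorphism
`φ : Con_c P → D` with `⟦x≤y⟧ = φ(Θ⁺_P(x,y))` for all `x, y ∈ P`. -/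
theorem measured_iff_exists_hom {D P : Type*} [DistribLattice D] [OrderBot D]
    (L : PartialLattice P) (bv : P → P → D) :
    ((∀ a, bv a a = ⊥) ∧
     (∀ a b c, bv a c ≤ bv a b ⊔ bv b c) ∧
     (∀ x y, L.le x y → bv x y = ⊥) ∧
     (∀ (X : Finset P) (a : P), L.join X = some a → ∀ (hX : X.Nonempty) (b : P),
       bv a b = X.sup' hX fun x => bv x b) ∧
     (∀ (X : Finset P) (a : P), L.meet X = some a → ∀ (hX : X.Nonempty) (b : P),
       bv b a = X.sup' hX fun x => bv b x)) ↔
    (∃ φ : Set (P × P) → D,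
      -- `φ` sends the least congruence to `0`
      φ (congGen L ∅) = ⊥ ∧
      -- `φ` is a join-homomorphism on compact (finitely generated) congruences
      (∀ S T : Finset (P × P),
        φ (congGen L (↑S ∪ ↑T)) = φ (congGen L ↑S) ⊔ φ (congGen L ↑T)) ∧
      -- `⟦x≤y⟧ = φ(Θ⁺_P(x,y))`
      (∀ x y, bv x y = φ (congGen L {(x, y)}))) := by
  constructor
  · rintro ⟨-, htrans, hle, hjoin, hmeet⟩
    exact (respectsCongGen_of_measured htrans hle hjoin hmeet).exists_hom
  · rintro ⟨φ, hbot, hsup, hsingle⟩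
    have h := respectsCongGen_of_hom hbot hsup hsingle
    exact ⟨h.bv_self, h.bv_trans, fun _ _ => h.bv_eq_bot_of_le, fun _ _ ha => h.bv_join ha,
      fun _ _ ha => h.bv_meet ha⟩
end
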